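/- arXiv:2409.17905 — 5 statements merged into one kernel-verified Lean document; each statement's English description precedes it below -/
import Mathlib

section
/- Under the hypotheses of the tetrahedral-constraint lemma, if T1 and T2 are triangulations of the (n+2)-gon whose weights satisfy |W(T1) - W(T2)| = D, then the flip distance between T1 and T2 is at least D. -/
/-- `(a,b)` with `a < b` is a diagonal of the convex `(n+2)`-gon with vertices
`0, …, n+1`. -/
def IsDiagonal (n : ℕ) (d : ℕ × ℕ) : Prop :=
  d.1 + 2 ≤ d.2 ∧ d.2 ≤ n + 1 ∧ ¬(d.1 = 0 ∧ d.2 = n + 1)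

/-- Two diagonals of a convex polygon cross. -/
def Crosses (d e : ℕ × ℕ) : Prop :=
  (d.1 < e.1 ∧ e.1 < d.2 ∧ d.2 < e.2) ∨ (e.1 < d.1 ∧ d.1 < e.2 ∧ e.2 < d.2)

/-- A triangulation of the convex `(n+2)`-gon: a maximal set of pairwise
non-crossing diagonals. -/
def IsTriangulation (n : ℕ) (T : Finset (ℕ × ℕ)) : Prop :=
  (∀ d ∈ T, IsDiagonal n d) ∧
  (∀ d ∈ T, ∀ e ∈ T, ¬Crosses d e) ∧
  (∀ d, IsDiagonal n d → d ∉ T → ∃ e ∈ T, Crosses d e)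

/-- Two triangulations differ by a flip: one diagonal `e` is replaced by
another diagonal `f` (the opposite diagonal of the quadrilateral formed by the
two triangles adjacent to `e`). -/
def IsFlip (n : ℕ) (T₁ T₂ : Finset (ℕ × ℕ)) : Prop :=
  IsTriangulation n T₁ ∧ IsTriangulation n T₂ ∧
  ∃ e f, e ∈ T₁ ∧ f ∉ T₁ ∧ T₂ = insert f (T₁.erase e)

/-- The flip distance between two triangulations: the minimum number of flips
transforming one into the other. -/
noncomputable def flipDist (n : ℕ) (T₁ T₂ : Finset (ℕ × ℕ)) : ℕ :=
  sInf {m | ∃ g : ℕ → Finset (ℕ × ℕ), g 0 = T₁ ∧ g m = T₂ ∧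
    ∀ i < m, IsFlip n (g i) (g (i + 1))}


/-- `a < b` are joined by an edge of the triangulation `T` of the
`(n+2)`-gon: either a polygon side or a diagonal of `T`. -/
def IsEdge (n : ℕ) (T : Finset (ℕ × ℕ)) (a b : ℕ) : Prop :=
  b ≤ n + 1 ∧ (b = a + 1 ∨ (a = 0 ∧ b = n + 1) ∨ (a, b) ∈ T)

open Classical in
/-- The triangles of a triangulation `T` of the `(n+2)`-gon, each recorded as
an increasing triple `(a,b,c)` with `a < b < c` (which is the counterclockwise
orientation, the vertices being labeled counterclockwise). -/
noncomputable def trianglesOf (n : ℕ) (T : Finset (ℕ × ℕ)) : Finset (ℕ × ℕ × ℕ) :=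
  (Finset.range (n + 2) ×ˢ Finset.range (n + 2) ×ˢ Finset.range (n + 2)).filter
    (fun t => t.1 < t.2.1 ∧ t.2.1 < t.2.2 ∧ IsEdge n T t.1 t.2.1 ∧
      IsEdge n T t.2.1 t.2.2 ∧ IsEdge n T t.1 t.2.2)

/-- The weight of a triangulation: the sum of `W` over its counterclockwise
triangles. -/
noncomputable def weight (n : ℕ) (W : ℕ → ℕ → ℕ → ℝ) (T : Finset (ℕ × ℕ)) : ℝ :=
  ∑ t ∈ trianglesOf n T, W t.1 t.2.1 t.2.2

namespace FD


theorem crosses_symm {d e : ℕ × ℕ} (h : Crosses d e) : Crosses e d := by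
  obtain ⟨d1, d2⟩ := d; obtain ⟨e1, e2⟩ := e
  unfold Crosses at *; simp only at *; omega

theorem not_crosses_self (d : ℕ × ℕ) : ¬ Crosses d d := by
  obtain ⟨d1, d2⟩ := d; unfold Crosses; simp only; omega

/-- A diagonal-or-side between two vertices, as an `IsEdge`. -/
theorem isEdge_of_mem {n : ℕ} {T : Finset (ℕ × ℕ)} (hT : IsTriangulation n T)
    {a c : ℕ} (h : (a, c) ∈ T) : IsEdge n T a c :=
  ⟨(hT.1 _ h).2.1, Or.inr (Or.inr h)⟩

/-- If `a < b`, `IsEdge a b`, and there is a vertex strictly between `a` and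
`b`, and `b ≤ n+1` with not both `a = 0, b = n+1`, then `(a,b) ∈ T`. -/
theorem mem_of_isEdge {n : ℕ} {T : Finset (ℕ × ℕ)} {a b : ℕ}
    (h : IsEdge n T a b) (h1 : a + 2 ≤ b) (h2 : ¬(a = 0 ∧ b = n + 1)) :
    (a, b) ∈ T := by
  obtain ⟨hb, h3 | h3 | h3⟩ := h
  · omega
  · exact absurd h3 h2
  · exact h3

/-- Inner-vertex existence: every diagonal of a triangulation has a triangle
on its inner side. -/
theorem inner_exists {n : ℕ} {T : Finset (ℕ × ℕ)} (hT : IsTriangulation n T)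
    {a c : ℕ} (h : (a, c) ∈ T) :
    ∃ b, a < b ∧ b < c ∧ IsEdge n T a b ∧ IsEdge n T b c := by
  classical
  obtain ⟨hac, hc, hne⟩ := hT.1 _ h
  simp only at hac hc hne
  set S : Finset ℕ := (Finset.Ioo a c).filter (fun x => IsEdge n T a x) with hS
  have hmem : a + 1 ∈ S := by
    simp only [hS, Finset.mem_filter, Finset.mem_Ioo]
    exact ⟨⟨by omega, by omega⟩, by omega, Or.inl rfl⟩
  have hSne : S.Nonempty := ⟨a + 1, hmem⟩
  set b := S.max' hSne with hb
  have hbS : b ∈ S := S.max'_mem hSne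
  simp only [hS, Finset.mem_filter, Finset.mem_Ioo] at hbS
  obtain ⟨⟨hab, hbc⟩, hEab⟩ := hbS
  refine ⟨b, hab, hbc, hEab, ?_⟩
  by_cases hside : c = b + 1
  · exact ⟨hc, Or.inl hside⟩
  refine ⟨hc, Or.inr (Or.inr ?_)⟩
  by_contra hbcT
  have hdiag : IsDiagonal n (b, c) := ⟨by omega, by omega, by omega⟩
  obtain ⟨⟨p, q⟩, hpq, hcr⟩ := hT.2.2 _ hdiag hbcT
  have hpqd := hT.1 _ hpq
  simp only [IsDiagonal] at hpqd
  unfold Crosses at hcr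
  simp only at hcr
  rcases hcr with ⟨h1, h2, h3⟩ | ⟨h1, h2, h3⟩
  · -- b < p < c < q : crosses (a,c)
    exact hT.2.1 _ h _ hpq (Or.inl ⟨by omega, by omega, by omega⟩)
  · -- p < b < q < c
    rcases lt_trichotomy p a with hpa | hpa | hpa
    · exact hT.2.1 _ h _ hpq (Or.inr ⟨by omega, by omega, by omega⟩)
    · -- p = a : q ∈ S, q > b contradicts max
      have hqS : q ∈ S := by
        simp only [hS, Finset.mem_filter, Finset.mem_Ioo]
        refine ⟨⟨by omega, by omega⟩, by omega, Or.inr (Or.inr ?_)⟩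
        rwa [hpa] at hpq
      have := S.le_max' q hqS
      omega
    · -- a < p < b : (a,b) ∈ T crosses (p,q)
      have habT : (a, b) ∈ T := mem_of_isEdge hEab (by omega) (by omega)
      exact hT.2.1 _ habT _ hpq (Or.inl ⟨by omega, by omega, by omega⟩)

theorem inner_unique {n : ℕ} {T : Finset (ℕ × ℕ)} (hT : IsTriangulation n T)
    {a c b b' : ℕ} (hc : c ≤ n + 1)
    (h1 : a < b) (h2 : b < c) (h3 : IsEdge n T a b) (h4 : IsEdge n T b c)
    (h1' : a < b') (h2' : b' < c) (h3' : IsEdge n T a b') (h4' : IsEdge n T b' c) :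
    b = b' := by
  have key : ∀ x y : ℕ, a < x → x < y → y < c →
      IsEdge n T a y → IsEdge n T x c → False := by
    intro x y hax hxy hyc hEay hExc
    have hayT : (a, y) ∈ T := mem_of_isEdge hEay (by omega) (by omega)
    have hxcT : (x, c) ∈ T := mem_of_isEdge hExc (by omega) (by omega)
    exact hT.2.1 _ hayT _ hxcT (Or.inl ⟨by omega, by omega, by omega⟩)
  rcases lt_trichotomy b b' with hbb | hbb | hbb
  · exact absurd (key b b' h1 hbb h2' h3' h4) (by simp)
  · exact hbb
  · exact absurd (key b' b h1' hbb h2 h3 h4') (by simp)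

/-- `d` is a vertex on the outer side of the diagonal `(a,c)` joined to both
its endpoints. -/
def OuterAdj (n : ℕ) (T : Finset (ℕ × ℕ)) (a c d : ℕ) : Prop :=
  (c < d ∧ d ≤ n + 1 ∧ IsEdge n T a d ∧ IsEdge n T c d) ∨
  (d < a ∧ IsEdge n T d a ∧ IsEdge n T d c)

theorem outer_unique {n : ℕ} {T : Finset (ℕ × ℕ)} (hT : IsTriangulation n T)
    {a c d d' : ℕ} (ha2 : a + 2 ≤ c) (hc : c ≤ n + 1)
    (hd : OuterAdj n T a c d) (hd' : OuterAdj n T a c d') : d = d' := by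
  -- mixed case helper
  have mixed : ∀ u v : ℕ, v < a → c < u → u ≤ n + 1 →
      IsEdge n T a u → IsEdge n T v c → False := by
    intro u v hva hcu hun hEau hEvc
    have h1 : (a, u) ∈ T := mem_of_isEdge hEau (by omega) (by omega)
    have h2 : (v, c) ∈ T := mem_of_isEdge hEvc (by omega) (by omega)
    exact hT.2.1 _ h2 _ h1 (Or.inl ⟨by omega, by omega, by omega⟩)
  have left : ∀ u v : ℕ, c < u → u < v → v ≤ n + 1 →
      IsEdge n T a u → IsEdge n T c v → False := by
    intro u v hcu huv hvn hEau hEcv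
    have h1 : (a, u) ∈ T := mem_of_isEdge hEau (by omega) (by omega)
    have h2 : (c, v) ∈ T := mem_of_isEdge hEcv (by omega) (by omega)
    exact hT.2.1 _ h1 _ h2 (Or.inl ⟨by omega, by omega, by omega⟩)
  have right : ∀ u v : ℕ, u < v → v < a →
      IsEdge n T u a → IsEdge n T v c → False := by
    intro u v huv hva hEua hEvc
    have h1 : (u, a) ∈ T := mem_of_isEdge hEua (by omega) (by omega)
    have h2 : (v, c) ∈ T := mem_of_isEdge hEvc (by omega) (by omega)
    exact hT.2.1 _ h1 _ h2 (Or.inl ⟨by omega, by omega, by omega⟩)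
  rcases hd with ⟨hcd, hdn, hEad, hEcd⟩ | ⟨hda, hEda, hEdc⟩ <;>
    rcases hd' with ⟨hcd', hdn', hEad', hEcd'⟩ | ⟨hda', hEda', hEdc'⟩
  · rcases lt_trichotomy d d' with hh | hh | hh
    · exact absurd (left d d' hcd hh hdn' hEad hEcd') (by simp)
    · exact hh
    · exact absurd (left d' d hcd' hh hdn hEad' hEcd) (by simp)
  · exact absurd (mixed d d' hda' hcd hdn hEad hEdc') (by simp)
  · exact absurd (mixed d' d hda hcd' hdn' hEad' hEdc) (by simp)
  · rcases lt_trichotomy d d' with hh | hh | hh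
    · exact absurd (right d d' hh hda' hEda hEdc') (by simp)
    · exact hh
    · exact absurd (right d' d hh hda hEda' hEdc) (by simp)







theorem outer_exists {n : ℕ} {T : Finset (ℕ × ℕ)} (hT : IsTriangulation n T)
    {a c : ℕ} (h : (a, c) ∈ T) : ∃ d, OuterAdj n T a c d := by
  classical
  obtain ⟨hac, hc, hne⟩ := hT.1 _ h
  simp only at hac hc hne
  by_cases ha : a = 0
  · -- a = 0, so c ≤ n: take d = min {x ∈ (c, n+1] | IsEdge 0 x}
    subst ha
    have hcn : c ≤ n := by omega
    set S : Finset ℕ := (Finset.Icc (c+1) (n+1)).filter (fun x => IsEdge n T 0 x) with hS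
    have hmem : n + 1 ∈ S := by
      simp only [hS, Finset.mem_filter, Finset.mem_Icc]
      exact ⟨⟨by omega, le_refl _⟩, by omega, Or.inr (Or.inl ⟨rfl, rfl⟩)⟩
    have hSne : S.Nonempty := ⟨_, hmem⟩
    set d := S.min' hSne with hd
    have hdS : d ∈ S := S.min'_mem hSne
    simp only [hS, Finset.mem_filter, Finset.mem_Icc] at hdS
    obtain ⟨⟨hcd, hdn⟩, hE0d⟩ := hdS
    refine ⟨d, Or.inl ⟨by omega, hdn, hE0d, ?_⟩⟩
    by_cases hside : d = c + 1
    · exact ⟨by omega, Or.inl hside⟩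
    refine ⟨by omega, Or.inr (Or.inr ?_)⟩
    by_contra hcdT
    have hdiag : IsDiagonal n (c, d) := ⟨by omega, by omega, by omega⟩
    obtain ⟨⟨p, q⟩, hpq, hcr⟩ := hT.2.2 _ hdiag hcdT
    have hpqd := hT.1 _ hpq
    simp only [IsDiagonal] at hpqd
    unfold Crosses at hcr
    simp only at hcr
    rcases hcr with ⟨h1, h2, h3⟩ | ⟨h1, h2, h3⟩
    · -- c < p < d < q : crosses (0,d) ∈ T
      have h0dT : (0, d) ∈ T := mem_of_isEdge hE0d (by omega) (by omega)
      exact hT.2.1 _ h0dT _ hpq (Or.inl ⟨by omega, by omega, by omega⟩)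
    · -- p < c < q < d
      rcases Nat.eq_zero_or_pos p with hp | hp
      · -- p = 0 : q contradicts minimality
        have hqS : q ∈ S := by
          simp only [hS, Finset.mem_filter, Finset.mem_Icc]
          refine ⟨⟨by omega, by omega⟩, by omega, Or.inr (Or.inr ?_)⟩
          subst hp; exact hpq
        have := S.min'_le q hqS
        omega
      · exact hT.2.1 _ h _ hpq (Or.inl ⟨by omega, by omega, by omega⟩)
  · -- a ≥ 1
    set S1 : Finset ℕ := (Finset.Icc (c+1) (n+1)).filter (fun x => IsEdge n T a x) with hS1
    by_cases hS1ne : S1.Nonempty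
    · set d := S1.min' hS1ne with hd
      have hdS : d ∈ S1 := S1.min'_mem hS1ne
      simp only [hS1, Finset.mem_filter, Finset.mem_Icc] at hdS
      obtain ⟨⟨hcd, hdn⟩, hEad⟩ := hdS
      refine ⟨d, Or.inl ⟨by omega, hdn, hEad, ?_⟩⟩
      by_cases hside : d = c + 1
      · exact ⟨by omega, Or.inl hside⟩
      refine ⟨by omega, Or.inr (Or.inr ?_)⟩
      by_contra hcdT
      have hdiag : IsDiagonal n (c, d) := ⟨by omega, by omega, by omega⟩
      obtain ⟨⟨p, q⟩, hpq, hcr⟩ := hT.2.2 _ hdiag hcdT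
      have hpqd := hT.1 _ hpq
      simp only [IsDiagonal] at hpqd
      unfold Crosses at hcr
      simp only at hcr
      have hadT : (a, d) ∈ T := mem_of_isEdge hEad (by omega) (by omega)
      rcases hcr with ⟨h1, h2, h3⟩ | ⟨h1, h2, h3⟩
      · -- c < p < d < q : crosses (a,d)
        exact hT.2.1 _ hadT _ hpq (Or.inl ⟨by omega, by omega, by omega⟩)
      · -- p < c < q < d
        rcases lt_trichotomy p a with hpa | hpa | hpa
        · -- p < a : (p,q) crosses (a,d)  (p < a < q < d)
          exact hT.2.1 _ hadT _ hpq (Or.inr ⟨by omega, by omega, by omega⟩)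
        · -- p = a : q ∈ S1 with q < d contradicts min
          have hqS : q ∈ S1 := by
            simp only [hS1, Finset.mem_filter, Finset.mem_Icc]
            refine ⟨⟨by omega, by omega⟩, by omega, Or.inr (Or.inr ?_)⟩
            subst hpa; exact hpq
          have := S1.min'_le q hqS
          omega
        · -- a < p < c < q : crosses (a,c)
          exact hT.2.1 _ h _ hpq (Or.inl ⟨by omega, by omega, by omega⟩)
    · -- no outer neighbour above c: take d = min {x < a | IsEdge x a}
      set S2 : Finset ℕ := (Finset.range a).filter (fun x => IsEdge n T x a) with hS2
      have hmem : a - 1 ∈ S2 := by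
        simp only [hS2, Finset.mem_filter, Finset.mem_range]
        refine ⟨by omega, by omega, Or.inl (by omega)⟩
      have hSne : S2.Nonempty := ⟨_, hmem⟩
      set d := S2.min' hSne with hd
      have hdS : d ∈ S2 := S2.min'_mem hSne
      simp only [hS2, Finset.mem_filter, Finset.mem_range] at hdS
      obtain ⟨hda, hEda⟩ := hdS
      refine ⟨d, Or.inr ⟨hda, hEda, ?_⟩⟩
      by_cases hside : d = 0 ∧ c = n + 1
      · exact ⟨by omega, Or.inr (Or.inl hside)⟩
      refine ⟨by omega, Or.inr (Or.inr ?_)⟩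
      by_contra hdcT
      have hdiag : IsDiagonal n (d, c) := ⟨by omega, by omega, hside⟩
      obtain ⟨⟨p, q⟩, hpq, hcr⟩ := hT.2.2 _ hdiag hdcT
      have hpqd := hT.1 _ hpq
      simp only [IsDiagonal] at hpqd
      unfold Crosses at hcr
      simp only at hcr
      have hdaT : d + 2 ≤ a → (d, a) ∈ T := fun hh => mem_of_isEdge hEda hh (by omega)
      rcases hcr with ⟨h1, h2, h3⟩ | ⟨h1, h2, h3⟩
      · -- d < p < c < q
        rcases lt_trichotomy p a with hpa | hpa | hpa
        · -- p < a : (p,q) crosses (d,a):  d < p < a < q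
          exact hT.2.1 _ (hdaT (by omega)) _ hpq (Or.inl ⟨by omega, by omega, by omega⟩)
        · -- p = a : q ∈ S1 nonempty, contradiction
          exact hS1ne ⟨q, by
            simp only [hS1, Finset.mem_filter, Finset.mem_Icc]
            refine ⟨⟨by omega, by omega⟩, by omega, Or.inr (Or.inr ?_)⟩
            subst hpa; exact hpq⟩
        · -- a < p < c < q : crosses (a,c)
          exact hT.2.1 _ h _ hpq (Or.inl ⟨by omega, by omega, by omega⟩)
      · -- p < d < q < c
        rcases lt_trichotomy q a with hqa | hqa | hqa
        · -- q < a : (p,q) crosses (d,a): p < d < q < a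
          exact hT.2.1 _ (hdaT (by omega)) _ hpq (Or.inr ⟨by omega, by omega, by omega⟩)
        · -- q = a : p ∈ S2 with p < d contradicts min
          have hpS : p ∈ S2 := by
            simp only [hS2, Finset.mem_filter, Finset.mem_range]
            refine ⟨by omega, by omega, Or.inr (Or.inr ?_)⟩
            subst hqa; exact hpq
          have := S2.min'_le p hpS
          omega
        · -- a < q < c : (p,q) crosses (a,c): p < a < q < c
          exact hT.2.1 _ h _ hpq (Or.inr ⟨by omega, by omega, by omega⟩)



theorem mem_trianglesOf {n : ℕ} {T : Finset (ℕ × ℕ)} {t : ℕ × ℕ × ℕ} :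
    t ∈ trianglesOf n T ↔ t.1 < t.2.1 ∧ t.2.1 < t.2.2 ∧ IsEdge n T t.1 t.2.1 ∧
      IsEdge n T t.2.1 t.2.2 ∧ IsEdge n T t.1 t.2.2 := by
  obtain ⟨a, b, c⟩ := t
  simp only [trianglesOf, Finset.mem_filter, Finset.mem_product, Finset.mem_range]
  constructor
  · rintro ⟨-, h⟩; exact h
  · rintro ⟨h1, h2, h3, h4, h5⟩
    have hc : c ≤ n + 1 := h4.1
    exact ⟨⟨by omega, by omega, by omega⟩, h1, h2, h3, h4, h5⟩

/-- Edge description of the flipped triangulation. -/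
theorem isEdge_flip {n : ℕ} {T : Finset (ℕ × ℕ)} {e f : ℕ × ℕ}
    (he : IsDiagonal n e) (hf : IsDiagonal n f) (hfT : f ∉ T) {x y : ℕ} :
    IsEdge n (insert f (T.erase e)) x y ↔
      ((x, y) = f ∨ (IsEdge n T x y ∧ (x, y) ≠ e)) := by
  obtain ⟨e1, e2⟩ := e; obtain ⟨f1, f2⟩ := f
  obtain ⟨he1, he2, he3⟩ := he
  obtain ⟨hf1, hf2, hf3⟩ := hf
  simp only at he1 he2 he3 hf1 hf2 hf3
  constructor
  · rintro ⟨hy, h | h | h⟩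
    · refine Or.inr ⟨⟨hy, Or.inl h⟩, ?_⟩
      intro hc; rw [Prod.ext_iff] at hc; simp only at hc; omega
    · refine Or.inr ⟨⟨hy, Or.inr (Or.inl h)⟩, ?_⟩
      intro hc; rw [Prod.ext_iff] at hc; simp only at hc; omega
    · rcases Finset.mem_insert.1 h with h | h
      · exact Or.inl h
      · exact Or.inr ⟨⟨hy, Or.inr (Or.inr (Finset.mem_of_mem_erase h))⟩,
          Finset.ne_of_mem_erase h⟩
  · rintro (h | ⟨⟨hy, h⟩, hne⟩)
    · rw [Prod.ext_iff] at h; simp only at h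
      refine ⟨by omega, Or.inr (Or.inr (Finset.mem_insert.2 (Or.inl ?_)))⟩
      simp [h.1, h.2]
    · refine ⟨hy, ?_⟩
      rcases h with h | h | h
      · exact Or.inl h
      · exact Or.inr (Or.inl h)
      · exact Or.inr (Or.inr (Finset.mem_insert.2 (Or.inr
          (Finset.mem_erase.2 ⟨hne, h⟩))))

theorem isFlip_symm {n : ℕ} {T T' : Finset (ℕ × ℕ)} (h : IsFlip n T T') :
    IsFlip n T' T := by
  obtain ⟨hT, hT', e, f, heT, hfT, hEq⟩ := h
  refine ⟨hT', hT, f, e, ?_, ?_, ?_⟩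
  · rw [hEq]; exact Finset.mem_insert_self _ _
  · rw [hEq]
    intro hcon
    rcases Finset.mem_insert.1 hcon with h | h
    · subst h; exact hfT heT
    · exact (Finset.mem_erase.1 h).1 rfl
  · rw [hEq, Finset.erase_insert, Finset.insert_erase heT]
    intro hcon; exact hfT (Finset.mem_of_mem_erase hcon)

/-- In a flip, the new diagonal crosses the removed one. -/
theorem flip_crosses {n : ℕ} {T : Finset (ℕ × ℕ)} (hT : IsTriangulation n T)
    {T' : Finset (ℕ × ℕ)} (hT' : IsTriangulation n T') {e f : ℕ × ℕ}
    (heT : e ∈ T) (hfT : f ∉ T) (hEq : T' = insert f (T.erase e)) :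
    Crosses f e := by
  have hfd : IsDiagonal n f := hT'.1 f (by rw [hEq]; exact Finset.mem_insert_self _ _)
  obtain ⟨h, hhT, hcr⟩ := hT.2.2 f hfd hfT
  by_cases hhe : h = e
  · subst hhe; exact hcr
  · exfalso
    have hh' : h ∈ T' := by
      rw [hEq]; exact Finset.mem_insert_of_mem (Finset.mem_erase.2 ⟨hhe, hhT⟩)
    exact hT'.2.1 f (by rw [hEq]; exact Finset.mem_insert_self _ _) h hh' hcr


/-- `p` is one of the three sides of the triple `t`. -/
def pairMem (p : ℕ × ℕ) (t : ℕ × ℕ × ℕ) : Prop :=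
  (t.1, t.2.1) = p ∨ (t.1, t.2.2) = p ∨ (t.2.1, t.2.2) = p

instance pairMemDec (p : ℕ × ℕ) (t : ℕ × ℕ × ℕ) : Decidable (pairMem p t) := by
  unfold pairMem; infer_instance

theorem not_isEdge_of_notMem {n : ℕ} {T : Finset (ℕ × ℕ)} {f1 f2 : ℕ}
    (hf : IsDiagonal n (f1, f2)) (h : (f1, f2) ∉ T) : ¬ IsEdge n T f1 f2 := by
  obtain ⟨h1, h2, h3⟩ := hf
  simp only at h1 h2 h3
  rintro ⟨-, hc | hc | hc⟩
  · omega
  · exact h3 hc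
  · exact h hc

theorem filter_pair_right {n : ℕ} {T : Finset (ℕ × ℕ)} (hT : IsTriangulation n T)
    {a b c d : ℕ} (ha2 : a + 2 ≤ c) (hcn : c ≤ n + 1) (hEac : IsEdge n T a c)
    (hab : a < b) (hbc : b < c) (hEab : IsEdge n T a b) (hEbc : IsEdge n T b c)
    (hcd : c < d) (hdn : d ≤ n + 1) (hEad : IsEdge n T a d) (hEcd : IsEdge n T c d) :
    (trianglesOf n T).filter (fun t => pairMem (a, c) t) = {(a, b, c), (a, c, d)} := by
  ext ⟨x, y, z⟩
  simp only [Finset.mem_filter, mem_trianglesOf, pairMem, Finset.mem_insert,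
    Finset.mem_singleton, Prod.mk.injEq]
  constructor
  · rintro ⟨⟨hxy, hyz, E1, E2, E3⟩, hp⟩
    rcases hp with ⟨rfl, rfl⟩ | ⟨rfl, rfl⟩ | ⟨rfl, rfl⟩
    · have hz : z = d := outer_unique hT ha2 hcn
        (Or.inl ⟨hyz, E2.1, E3, E2⟩) (Or.inl ⟨hcd, hdn, hEad, hEcd⟩)
      exact Or.inr ⟨rfl, rfl, hz⟩
    · have hy : y = b := inner_unique hT hcn hxy hyz E1 E2 hab hbc hEab hEbc
      exact Or.inl ⟨rfl, hy, rfl⟩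
    · have hx : x = d := outer_unique hT ha2 hcn
        (Or.inr ⟨hxy, E1, E3⟩) (Or.inl ⟨hcd, hdn, hEad, hEcd⟩)
      omega
  · rintro (⟨rfl, rfl, rfl⟩ | ⟨rfl, rfl, rfl⟩)
    · exact ⟨⟨hab, hbc, hEab, hEbc, hEac⟩, Or.inr (Or.inl ⟨rfl, rfl⟩)⟩
    · exact ⟨⟨by omega, hcd, hEac, hEcd, hEad⟩, Or.inl ⟨rfl, rfl⟩⟩

theorem filter_pair_left {n : ℕ} {T : Finset (ℕ × ℕ)} (hT : IsTriangulation n T)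
    {a b c d : ℕ} (ha2 : a + 2 ≤ c) (hcn : c ≤ n + 1) (hEac : IsEdge n T a c)
    (hab : a < b) (hbc : b < c) (hEab : IsEdge n T a b) (hEbc : IsEdge n T b c)
    (hda : d < a) (hEda : IsEdge n T d a) (hEdc : IsEdge n T d c) :
    (trianglesOf n T).filter (fun t => pairMem (a, c) t) = {(a, b, c), (d, a, c)} := by
  ext ⟨x, y, z⟩
  simp only [Finset.mem_filter, mem_trianglesOf, pairMem, Finset.mem_insert,
    Finset.mem_singleton, Prod.mk.injEq]
  constructor
  · rintro ⟨⟨hxy, hyz, E1, E2, E3⟩, hp⟩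
    rcases hp with ⟨rfl, rfl⟩ | ⟨rfl, rfl⟩ | ⟨rfl, rfl⟩
    · have hz : z = d := outer_unique hT ha2 hcn
        (Or.inl ⟨hyz, E2.1, E3, E2⟩) (Or.inr ⟨hda, hEda, hEdc⟩)
      omega
    · have hy : y = b := inner_unique hT hcn hxy hyz E1 E2 hab hbc hEab hEbc
      exact Or.inl ⟨rfl, hy, rfl⟩
    · have hx : x = d := outer_unique hT ha2 hcn
        (Or.inr ⟨hxy, E1, E3⟩) (Or.inr ⟨hda, hEda, hEdc⟩)
      exact Or.inr ⟨hx, rfl, rfl⟩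
  · rintro (⟨rfl, rfl, rfl⟩ | ⟨rfl, rfl, rfl⟩)
    · exact ⟨⟨hab, hbc, hEab, hEbc, hEac⟩, Or.inr (Or.inl ⟨rfl, rfl⟩)⟩
    · exact ⟨⟨hda, by omega, hEda, hEac, hEdc⟩, Or.inr (Or.inr ⟨rfl, rfl⟩)⟩

theorem filter_not_pair_subset {n : ℕ} {T : Finset (ℕ × ℕ)} {e f : ℕ × ℕ}
    (he : IsDiagonal n e) (hf : IsDiagonal n f) (hfT : f ∉ T) :
    (trianglesOf n T).filter (fun t => ¬ pairMem e t) ⊆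
      (trianglesOf n (insert f (T.erase e))).filter (fun t => ¬ pairMem f t) := by
  rintro ⟨x, y, z⟩ hmem
  simp only [Finset.mem_filter, mem_trianglesOf, pairMem, not_or] at hmem ⊢
  obtain ⟨⟨hxy, hyz, E1, E2, E3⟩, ne1, ne2, ne3⟩ := hmem
  refine ⟨⟨hxy, hyz, ?_, ?_, ?_⟩, ?_, ?_, ?_⟩
  · exact (isEdge_flip he hf hfT).2 (Or.inr ⟨E1, ne1⟩)
  · exact (isEdge_flip he hf hfT).2 (Or.inr ⟨E2, ne3⟩)
  · exact (isEdge_flip he hf hfT).2 (Or.inr ⟨E3, ne2⟩)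
  · obtain ⟨f1, f2⟩ := f
    intro hc
    rw [Prod.mk.injEq] at hc
    obtain ⟨rfl, rfl⟩ := hc
    exact not_isEdge_of_notMem hf hfT E1
  · obtain ⟨f1, f2⟩ := f
    intro hc
    rw [Prod.mk.injEq] at hc
    obtain ⟨rfl, rfl⟩ := hc
    exact not_isEdge_of_notMem hf hfT E3
  · obtain ⟨f1, f2⟩ := f
    intro hc
    rw [Prod.mk.injEq] at hc
    obtain ⟨rfl, rfl⟩ := hc
    exact not_isEdge_of_notMem hf hfT E2

theorem key_ineq {n : ℕ} {W : ℕ → ℕ → ℕ → ℝ}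
    (hcyc : ∀ i j k, W i j k = W j k i)
    (hanti : ∀ i j k, W i j k = -W i k j)
    (htet : ∀ i j k l, i ≤ n + 1 → j ≤ n + 1 → k ≤ n + 1 → l ≤ n + 1 →
      |W i j l + W j k l + W k i l + W k j i| ≤ 1)
    {i j k l : ℕ} (hi : i ≤ n + 1) (hj : j ≤ n + 1) (hk : k ≤ n + 1)
    (hl : l ≤ n + 1) :
    |W i j k + W i k l - W i j l - W j k l| ≤ 1 := by
  have h := htet i j k l hi hj hk hl
  have e1 : W k i l = -W i k l := by rw [hcyc k i l]; exact hanti i l k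
  have e2 : W k j i = -W i j k := by
    rw [hcyc k j i, hcyc j i k]
    have := hanti i j k; linarith
  rw [e1, e2] at h
  have hrw : W i j k + W i k l - W i j l - W j k l
      = -(W i j l + W j k l + -W i k l + -W i j k) := by ring
  rw [hrw, abs_neg]
  exact h

theorem flip_weight {n : ℕ} {W : ℕ → ℕ → ℕ → ℝ}
    (hcyc : ∀ i j k, W i j k = W j k i)
    (hanti : ∀ i j k, W i j k = -W i k j)
    (htet : ∀ i j k l, i ≤ n + 1 → j ≤ n + 1 → k ≤ n + 1 → l ≤ n + 1 →
      |W i j l + W j k l + W k i l + W k j i| ≤ 1)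
    {T T' : Finset (ℕ × ℕ)} (h : IsFlip n T T') :
    |weight n W T - weight n W T'| ≤ 1 := by
  obtain ⟨hT, hT', e, f, heT, hfT, hEq⟩ := h
  have hfT' : f ∈ T' := by rw [hEq]; exact Finset.mem_insert_self _ _
  have hfd : IsDiagonal n f := hT'.1 f hfT'
  have hed : IsDiagonal n e := hT.1 e heT
  have hcr : Crosses f e := flip_crosses hT hT' heT hfT hEq
  have hEq' : T = insert e (T'.erase f) := by
    rw [hEq, Finset.erase_insert (fun hc => hfT (Finset.mem_of_mem_erase hc)),
      Finset.insert_erase heT]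
  have heT'not : e ∉ T' := by
    rw [hEq]; intro hc
    rcases Finset.mem_insert.1 hc with hc | hc
    · exact hfT (hc ▸ heT)
    · exact (Finset.mem_erase.1 hc).1 rfl
  obtain ⟨b, hab, hbc, hEab, hEbc⟩ := inner_exists hT heT
  obtain ⟨d, hd⟩ := outer_exists hT heT
  obtain ⟨a, c⟩ := e
  obtain ⟨u, v⟩ := f
  have hac : a + 2 ≤ c := hed.1
  have hcn : c ≤ n + 1 := hed.2.1
  have hane : ¬(a = 0 ∧ c = n + 1) := hed.2.2
  have hfu : u + 2 ≤ v := hfd.1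
  have hfv : v ≤ n + 1 := hfd.2.1
  have hEac : IsEdge n T a c := isEdge_of_mem hT heT
  have memT' : ∀ p ∈ T, p ≠ (a, c) → p ∈ T' := fun p hp hne => by
    rw [hEq]; exact Finset.mem_insert_of_mem (Finset.mem_erase.2 ⟨hne, hp⟩)
  have nocross : ∀ p ∈ T, p ≠ (a, c) → Crosses (u, v) p → False := by
    intro p hp hne hcross
    exact hT'.2.1 _ hfT' _ (memT' p hp hne) hcross
  have hedge' : ∀ x y : ℕ, ((x, y) = (u, v) ∨ (IsEdge n T x y ∧ (x, y) ≠ (a, c))) →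
      IsEdge n T' x y := fun x y hh => by
    rw [hEq]; exact (isEdge_flip hed hfd hfT).2 hh
  have hP : (trianglesOf n T).filter (fun t => ¬ pairMem (a, c) t) =
      (trianglesOf n T').filter (fun t => ¬ pairMem (u, v) t) := by
    apply Finset.Subset.antisymm
    · rw [hEq]; exact filter_not_pair_subset hed hfd hfT
    · conv_rhs => rw [hEq']
      exact filter_not_pair_subset hfd hed heT'not
  unfold Crosses at hcr
  simp only at hcr
  rcases hd with ⟨hcd, hdn, hEad, hEcd⟩ | ⟨hda, hEda, hEdc⟩
  · -- outer vertex on the right: d > c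
    rcases hcr with ⟨h1, h2, h3⟩ | ⟨h1, h2, h3⟩
    · -- u < a < v < c : impossible
      exfalso
      refine nocross (a, d) (mem_of_isEdge hEad (by omega) (by omega))
        (by simp only [ne_eq, Prod.mk.injEq]; omega)
        (Or.inl ⟨by omega, by omega, by omega⟩)
    · -- a < u < c < v : here u = b and v = d, f = (b, d)
      have hub : u = b := by
        rcases lt_trichotomy u b with hh | hh | hh
        · exfalso
          exact nocross (a, b) (mem_of_isEdge hEab (by omega) (by omega))
            (by simp only [ne_eq, Prod.mk.injEq]; omega)
            (Or.inr ⟨by omega, by omega, by omega⟩)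
        · exact hh
        · exfalso
          exact nocross (b, c) (mem_of_isEdge hEbc (by omega) (by omega))
            (by simp only [ne_eq, Prod.mk.injEq]; omega)
            (Or.inr ⟨by omega, by omega, by omega⟩)
      have hvd : v = d := by
        rcases lt_trichotomy v d with hh | hh | hh
        · exfalso
          exact nocross (c, d) (mem_of_isEdge hEcd (by omega) (by omega))
            (by simp only [ne_eq, Prod.mk.injEq]; omega)
            (Or.inl ⟨by omega, by omega, by omega⟩)
        · exact hh
        · exfalso
          exact nocross (a, d) (mem_of_isEdge hEad (by omega) (by omega))
            (by simp only [ne_eq, Prod.mk.injEq]; omega)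
            (Or.inr ⟨by omega, by omega, by omega⟩)
      obtain rfl : b = u := hub.symm
      obtain rfl : d = v := hvd.symm
      -- triangles of T on (a,c) : (a,b,c) and (a,c,d)
      have hne1 : ((a, b, c) : ℕ × ℕ × ℕ) ≠ (a, c, d) := by
        simp only [ne_eq, Prod.mk.injEq]; omega
      have hne2 : ((b, c, d) : ℕ × ℕ × ℕ) ≠ (a, b, d) := by
        simp only [ne_eq, Prod.mk.injEq]; omega
      have hF1 := filter_pair_right hT hac hcn hEac hab hbc hEab hEbc hcd hdn hEad hEcd
      have hF2 := filter_pair_left hT' (a := b) (b := c) (c := d) (d := a)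
        hfu hfv (hedge' b d (Or.inl rfl)) hbc hcd
        (hedge' b c (Or.inr ⟨hEbc, by simp only [ne_eq, Prod.mk.injEq]; omega⟩))
        (hedge' c d (Or.inr ⟨hEcd, by simp only [ne_eq, Prod.mk.injEq]; omega⟩))
        hab
        (hedge' a b (Or.inr ⟨hEab, by simp only [ne_eq, Prod.mk.injEq]; omega⟩))
        (hedge' a d (Or.inr ⟨hEad, by simp only [ne_eq, Prod.mk.injEq]; omega⟩))
      have hs1 := Finset.sum_filter_add_sum_filter_not (trianglesOf n T)
        (fun t => pairMem (a, c) t) (fun t => W t.1 t.2.1 t.2.2)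
      rw [hF1, Finset.sum_pair hne1] at hs1
      have hs2 := Finset.sum_filter_add_sum_filter_not (trianglesOf n T')
        (fun t => pairMem (b, d) t) (fun t => W t.1 t.2.1 t.2.2)
      rw [hF2, Finset.sum_pair hne2] at hs2
      have hw : weight n W T - weight n W T' =
          W a b c + W a c d - W a b d - W b c d := by
        simp only [weight]
        rw [← hs1, ← hs2, hP]
        ring
      rw [hw]
      exact key_ineq hcyc hanti htet (by omega) (by omega) (by omega) (by omega)
  · -- outer vertex on the left: d < a
    rcases hcr with ⟨h1, h2, h3⟩ | ⟨h1, h2, h3⟩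
    · -- u < a < v < c : here u = d and v = b, f = (d, b)
      have hvb : v = b := by
        rcases lt_trichotomy v b with hh | hh | hh
        · exfalso
          exact nocross (a, b) (mem_of_isEdge hEab (by omega) (by omega))
            (by simp only [ne_eq, Prod.mk.injEq]; omega)
            (Or.inl ⟨by omega, by omega, by omega⟩)
        · exact hh
        · exfalso
          exact nocross (b, c) (mem_of_isEdge hEbc (by omega) (by omega))
            (by simp only [ne_eq, Prod.mk.injEq]; omega)
            (Or.inl ⟨by omega, by omega, by omega⟩)
      have hud : u = d := by
        rcases lt_trichotomy u d with hh | hh | hh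
        · exfalso
          exact nocross (d, c) (mem_of_isEdge hEdc (by omega) (by omega))
            (by simp only [ne_eq, Prod.mk.injEq]; omega)
            (Or.inl ⟨by omega, by omega, by omega⟩)
        · exact hh
        · exfalso
          exact nocross (d, a) (mem_of_isEdge hEda (by omega) (by omega))
            (by simp only [ne_eq, Prod.mk.injEq]; omega)
            (Or.inr ⟨by omega, by omega, by omega⟩)
      obtain rfl : b = v := hvb.symm
      obtain rfl : d = u := hud.symm
      have hne1 : ((a, b, c) : ℕ × ℕ × ℕ) ≠ (d, a, c) := by
        simp only [ne_eq, Prod.mk.injEq]; omega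
      have hne2 : ((d, a, b) : ℕ × ℕ × ℕ) ≠ (d, b, c) := by
        simp only [ne_eq, Prod.mk.injEq]; omega
      have hF1 := filter_pair_left hT hac hcn hEac hab hbc hEab hEbc hda hEda hEdc
      have hF2 := filter_pair_right hT' (a := d) (b := a) (c := b) (d := c)
        hfu (by omega) (hedge' d b (Or.inl rfl)) hda hab
        (hedge' d a (Or.inr ⟨hEda, by simp only [ne_eq, Prod.mk.injEq]; omega⟩))
        (hedge' a b (Or.inr ⟨hEab, by simp only [ne_eq, Prod.mk.injEq]; omega⟩))
        hbc hcn
        (hedge' d c (Or.inr ⟨hEdc, by simp only [ne_eq, Prod.mk.injEq]; omega⟩))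
        (hedge' b c (Or.inr ⟨hEbc, by simp only [ne_eq, Prod.mk.injEq]; omega⟩))
      have hs1 := Finset.sum_filter_add_sum_filter_not (trianglesOf n T)
        (fun t => pairMem (a, c) t) (fun t => W t.1 t.2.1 t.2.2)
      rw [hF1, Finset.sum_pair hne1] at hs1
      have hs2 := Finset.sum_filter_add_sum_filter_not (trianglesOf n T')
        (fun t => pairMem (d, b) t) (fun t => W t.1 t.2.1 t.2.2)
      rw [hF2, Finset.sum_pair hne2] at hs2
      have hw : weight n W T - weight n W T' =
          -(W d a b + W d b c - W d a c - W a b c) := by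
        simp only [weight]
        rw [← hs1, ← hs2, hP]
        ring
      rw [hw, abs_neg]
      exact key_ineq hcyc hanti htet (by omega) (by omega) (by omega) (by omega)
    · -- a < u < c < v : impossible since d < a
      exfalso
      refine nocross (d, c) (mem_of_isEdge hEdc (by omega) (by omega))
        (by simp only [ne_eq, Prod.mk.injEq]; omega)
        (Or.inr ⟨by omega, by omega, by omega⟩)

theorem flip_to_fan {n : ℕ} {T : Finset (ℕ × ℕ)} (hT : IsTriangulation n T)
    {x y : ℕ} (hxyT : (x, y) ∈ T) (hx : 1 ≤ x)
    (hE0x : IsEdge n T 0 x) (hE0y : IsEdge n T 0 y) :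
    ∃ T', IsFlip n T T' ∧
      (T'.filter (fun d => d.1 ≠ 0)).card < (T.filter (fun d => d.1 ≠ 0)).card := by
  classical
  have hxy : x + 2 ≤ y := (hT.1 _ hxyT).1
  have hyn : y ≤ n + 1 := (hT.1 _ hxyT).2.1
  obtain ⟨w, hxw, hwy, hExw, hEwy⟩ := inner_exists hT hxyT
  have hfd : IsDiagonal n (0, w) := ⟨by omega, by omega, by omega⟩
  have hfT : (0, w) ∉ T := fun hc =>
    hT.2.1 _ hc _ hxyT (Or.inl ⟨by omega, by omega, by omega⟩)
  set T' := insert (0, w) (T.erase (x, y)) with hT'def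
  have hmemT' : ∀ p ∈ T, p ≠ (x, y) → p ∈ T' :=
    fun p hp hne => Finset.mem_insert_of_mem (Finset.mem_erase.2 ⟨hne, hp⟩)
  have hfmem : (0, w) ∈ T' := Finset.mem_insert_self _ _
  -- the new diagonal crosses nothing else in T
  have hnc : ∀ h ∈ T, h ≠ (x, y) → ¬ Crosses (0, w) h := by
    rintro ⟨p, q⟩ hpq hne hcross
    have hpq2 : p + 2 ≤ q := (hT.1 _ hpq).1
    have hpqn : q ≤ n + 1 := (hT.1 _ hpq).2.1
    have hpqe : ¬(p = 0 ∧ q = n + 1) := (hT.1 _ hpq).2.2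
    rcases hcross with ⟨c1, c2, c3⟩ | ⟨c1, c2, c3⟩
    · -- 0 < p < w < q
      rcases lt_trichotomy q y with hq | hq | hq
      · -- w < q < y : crosses (w,y)
        have hwyT : (w, y) ∈ T := mem_of_isEdge hEwy (by omega) (by omega)
        exact hT.2.1 _ hwyT _ hpq (Or.inr ⟨by omega, by omega, by omega⟩)
      · -- q = y
        rcases lt_trichotomy p x with hpx | hpx | hpx
        · have h0xT : (0, x) ∈ T := mem_of_isEdge hE0x (by omega) (by omega)
          exact hT.2.1 _ h0xT _ hpq (Or.inl ⟨by omega, by omega, by omega⟩)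
        · exact hne (by simp only [Prod.mk.injEq]; omega)
        · have hxwT : (x, w) ∈ T := mem_of_isEdge hExw (by omega) (by omega)
          exact hT.2.1 _ hxwT _ hpq (Or.inl ⟨by omega, by omega, by omega⟩)
      · -- q > y : crosses (0,y)
        have h0yT : (0, y) ∈ T := mem_of_isEdge hE0y (by omega) (by omega)
        exact hT.2.1 _ h0yT _ hpq (Or.inl ⟨by omega, by omega, by omega⟩)
    · omega
  have hT'tri : IsTriangulation n T' := by
    refine ⟨?_, ?_, ?_⟩
    · intro d hd
      rcases Finset.mem_insert.1 hd with hd | hd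
      · exact hd ▸ hfd
      · exact hT.1 _ (Finset.mem_of_mem_erase hd)
    · intro d1 h1 d2 h2
      rcases Finset.mem_insert.1 h1 with h1 | h1 <;>
        rcases Finset.mem_insert.1 h2 with h2 | h2
      · subst h1; subst h2; exact not_crosses_self _
      · subst h1
        exact hnc _ (Finset.mem_of_mem_erase h2) (Finset.ne_of_mem_erase h2)
      · subst h2
        exact fun hc => hnc _ (Finset.mem_of_mem_erase h1)
          (Finset.ne_of_mem_erase h1) (crosses_symm hc)
      · exact hT.2.1 _ (Finset.mem_of_mem_erase h1) _ (Finset.mem_of_mem_erase h2)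
    · intro g hg hgT'
      by_cases hgxy : g = (x, y)
      · refine ⟨(0, w), hfmem, ?_⟩
        subst hgxy
        exact Or.inr ⟨by omega, by omega, by omega⟩
      by_cases hgT : g ∈ T
      · exact absurd (hmemT' g hgT hgxy) hgT'
      obtain ⟨h, hhT, hcrossgh⟩ := hT.2.2 g hg hgT
      by_cases hhxy : h = (x, y)
      · obtain ⟨g1, g2⟩ := g
        subst hhxy
        have hg2 : g1 + 2 ≤ g2 := hg.1
        have hg2n : g2 ≤ n + 1 := hg.2.1
        rcases hcrossgh with ⟨c1, c2, c3⟩ | ⟨c1, c2, c3⟩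
        · -- g1 < x < g2 < y
          rcases lt_trichotomy g2 w with hh | hh | hh
          · have hxwT : (x, w) ∈ T := mem_of_isEdge hExw (by omega) (by omega)
            exact ⟨(x, w), hmemT' _ hxwT (by simp only [ne_eq, Prod.mk.injEq]; omega),
              Or.inl ⟨by omega, by omega, by omega⟩⟩
          · rcases Nat.eq_zero_or_pos g1 with h0 | h0
            · exact absurd (by rw [h0, hh]; exact hfmem) hgT'
            · have h0xT : (0, x) ∈ T := mem_of_isEdge hE0x (by omega) (by omega)
              exact ⟨(0, x), hmemT' _ h0xT (by simp only [ne_eq, Prod.mk.injEq]; omega),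
                Or.inr ⟨by omega, by omega, by omega⟩⟩
          · rcases Nat.eq_zero_or_pos g1 with h0 | h0
            · have hwyT : (w, y) ∈ T := mem_of_isEdge hEwy (by omega) (by omega)
              exact ⟨(w, y), hmemT' _ hwyT (by simp only [ne_eq, Prod.mk.injEq]; omega),
                Or.inl ⟨by omega, by omega, by omega⟩⟩
            · exact ⟨(0, w), hfmem, Or.inr ⟨by omega, by omega, by omega⟩⟩
        · -- x < g1 < y < g2
          rcases lt_trichotomy g1 w with hh | hh | hh
          · exact ⟨(0, w), hfmem, Or.inr ⟨by omega, by omega, by omega⟩⟩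
          · have h0yT : (0, y) ∈ T := mem_of_isEdge hE0y (by omega) (by omega)
            exact ⟨(0, y), hmemT' _ h0yT (by simp only [ne_eq, Prod.mk.injEq]; omega),
              Or.inr ⟨by omega, by omega, by omega⟩⟩
          · have hwyT : (w, y) ∈ T := mem_of_isEdge hEwy (by omega) (by omega)
            exact ⟨(w, y), hmemT' _ hwyT (by simp only [ne_eq, Prod.mk.injEq]; omega),
              Or.inr ⟨by omega, by omega, by omega⟩⟩
      · exact ⟨h, hmemT' _ hhT hhxy, hcrossgh⟩
  refine ⟨T', ⟨hT, hT'tri, (x, y), (0, w), hxyT, hfT, rfl⟩, ?_⟩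
  have h1 : T'.filter (fun d => d.1 ≠ 0) = (T.filter (fun d => d.1 ≠ 0)).erase (x, y) := by
    rw [hT'def, Finset.filter_insert, if_neg (by simp), Finset.filter_erase]
  rw [h1]
  have hmemf : (x, y) ∈ T.filter (fun d => d.1 ≠ 0) :=
    Finset.mem_filter.2 ⟨hxyT, by simp; omega⟩
  rw [Finset.card_erase_of_mem hmemf]
  have := Finset.card_pos.2 ⟨_, hmemf⟩
  omega

theorem exists_flippable {n : ℕ} {T : Finset (ℕ × ℕ)} (hT : IsTriangulation n T)
    {a c : ℕ} (hacT : (a, c) ∈ T) (ha : a ≠ 0) :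
    ∃ x y, (x, y) ∈ T ∧ 1 ≤ x ∧ IsEdge n T 0 x ∧ IsEdge n T 0 y := by
  classical
  have hac : a + 2 ≤ c := (hT.1 _ hacT).1
  have hcn : c ≤ n + 1 := (hT.1 _ hacT).2.1
  set k := a + 1 with hk
  have h0k : (0, k) ∉ T := fun hc =>
    hT.2.1 _ hc _ hacT (Or.inl ⟨by omega, by omega, by omega⟩)
  set Sx : Finset ℕ := (Finset.range k).filter (fun v => 1 ≤ v ∧ IsEdge n T 0 v) with hSx
  have h1Sx : 1 ∈ Sx := by
    simp only [hSx, Finset.mem_filter, Finset.mem_range]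
    exact ⟨by omega, le_refl _, by omega, Or.inl rfl⟩
  set x := Sx.max' ⟨1, h1Sx⟩ with hxdef
  have hxS : x ∈ Sx := Sx.max'_mem _
  simp only [hSx, Finset.mem_filter, Finset.mem_range] at hxS
  obtain ⟨hxk, hx1, hE0x⟩ := hxS
  set Sy : Finset ℕ := (Finset.Icc (k + 1) (n + 1)).filter (fun v => IsEdge n T 0 v) with hSy
  have hnSy : n + 1 ∈ Sy := by
    simp only [hSy, Finset.mem_filter, Finset.mem_Icc]
    exact ⟨⟨by omega, le_refl _⟩, le_refl _, Or.inr (Or.inl ⟨rfl, rfl⟩)⟩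
  set y := Sy.min' ⟨_, hnSy⟩ with hydef
  have hyS : y ∈ Sy := Sy.min'_mem _
  simp only [hSy, Finset.mem_filter, Finset.mem_Icc] at hyS
  obtain ⟨⟨hky, hyn⟩, hE0y⟩ := hyS
  refine ⟨x, y, ?_, hx1, hE0x, hE0y⟩
  by_contra hxyT
  have hdiag : IsDiagonal n (x, y) := ⟨by omega, by omega, by omega⟩
  obtain ⟨⟨p, q⟩, hpq, hcr⟩ := hT.2.2 _ hdiag hxyT
  have hpq2 : p + 2 ≤ q := (hT.1 _ hpq).1
  have hpqn : q ≤ n + 1 := (hT.1 _ hpq).2.1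
  rcases hcr with ⟨c1, c2, c3⟩ | ⟨c1, c2, c3⟩
  · -- x < p < y < q
    have h0yT : (0, y) ∈ T := mem_of_isEdge hE0y (by omega) (by omega)
    exact hT.2.1 _ h0yT _ hpq (Or.inl ⟨by omega, by omega, by omega⟩)
  · -- p < x < q < y
    rcases Nat.eq_zero_or_pos p with hp | hp
    · subst hp
      rcases lt_trichotomy q k with hqk | hqk | hqk
      · have hqSx : q ∈ Sx := by
          simp only [hSx, Finset.mem_filter, Finset.mem_range]
          exact ⟨hqk, by omega, by omega, Or.inr (Or.inr hpq)⟩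
        have := Sx.le_max' q hqSx
        omega
      · exact h0k (hqk ▸ hpq)
      · have hqSy : q ∈ Sy := by
          simp only [hSy, Finset.mem_filter, Finset.mem_Icc]
          exact ⟨⟨by omega, by omega⟩, by omega, Or.inr (Or.inr hpq)⟩
        have := Sy.min'_le q hqSy
        omega
    · have h0xT : (0, x) ∈ T := mem_of_isEdge hE0x (by omega) (by omega)
      exact hT.2.1 _ h0xT _ hpq (Or.inl ⟨by omega, by omega, by omega⟩)

theorem reach_fan {n : ℕ} : ∀ (k : ℕ) (T : Finset (ℕ × ℕ)), IsTriangulation n T →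
    (T.filter (fun d => d.1 ≠ 0)).card ≤ k →
    ∃ (m : ℕ) (g : ℕ → Finset (ℕ × ℕ)), g 0 = T ∧ (∀ i < m, IsFlip n (g i) (g (i + 1))) ∧
      IsTriangulation n (g m) ∧ ((g m).filter (fun d => d.1 ≠ 0)).card = 0 := by
  intro k
  induction k with
  | zero =>
    intro T hT hc
    exact ⟨0, fun _ => T, rfl, fun i hi => absurd hi (by omega), hT, by dsimp only; omega⟩
  | succ k ih =>
    intro T hT hc
    by_cases h0 : (T.filter (fun d => d.1 ≠ 0)).card = 0
    · exact ⟨0, fun _ => T, rfl, fun i hi => absurd hi (by omega), hT, h0⟩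
    · have hpos : 0 < (T.filter (fun d => d.1 ≠ 0)).card := by omega
      obtain ⟨p, hp⟩ := Finset.card_pos.1 hpos
      obtain ⟨hpT, hp0⟩ := Finset.mem_filter.1 hp
      obtain ⟨a, c⟩ := p
      obtain ⟨x, y, hxyT, hx1, hE0x, hE0y⟩ := exists_flippable hT hpT (by simpa using hp0)
      obtain ⟨T', hflip, hlt⟩ := flip_to_fan hT hxyT hx1 hE0x hE0y
      obtain ⟨m, g, hg0, hgf, hgtri, hgcard⟩ := ih T' hflip.2.1 (by omega)
      refine ⟨m + 1, fun i => if i = 0 then T else g (i - 1), by simp, ?_, ?_, ?_⟩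
      · intro i hi
        rcases Nat.eq_zero_or_pos i with h | h
        · subst h
          simp only [if_pos rfl, if_neg (by omega : ¬(0 + 1 = 0))]
          rw [hg0]
          exact hflip
        · simp only [if_neg (by omega : ¬(i = 0)), if_neg (by omega : ¬(i + 1 = 0))]
          have h2 : i + 1 - 1 = i - 1 + 1 := by omega
          rw [h2]
          exact hgf (i - 1) (by omega)
      · simp only [if_neg (by omega : ¬(m + 1 = 0))]
        simpa using hgtri
      · simp only [if_neg (by omega : ¬(m + 1 = 0))]
        simpa using hgcard

theorem fan_unique {n : ℕ} {T T' : Finset (ℕ × ℕ)} (hT : IsTriangulation n T)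
    (hT' : IsTriangulation n T') (h1 : (T.filter (fun d => d.1 ≠ 0)).card = 0)
    (h2 : (T'.filter (fun d => d.1 ≠ 0)).card = 0) : T = T' := by
  have hz : ∀ (S : Finset (ℕ × ℕ)), (S.filter (fun d => d.1 ≠ 0)).card = 0 →
      ∀ d ∈ S, d.1 = 0 := by
    intro S hS d hd
    by_contra hc
    exact Finset.eq_empty_iff_forall_notMem.1 (Finset.card_eq_zero.1 hS) d
      (Finset.mem_filter.2 ⟨hd, hc⟩)
  have key : ∀ S S' : Finset (ℕ × ℕ), IsTriangulation n S → IsTriangulation n S' →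
      (∀ d ∈ S, d.1 = 0) → (∀ d ∈ S', d.1 = 0) → S ⊆ S' := by
    intro S S' hS hS' hSd hS'd d hd
    by_contra hdS'
    obtain ⟨e, heS', hcr⟩ := hS'.2.2 d (hS.1 d hd) hdS'
    have t1 := hSd d hd
    have t2 := hS'd e heS'
    obtain ⟨d1, d2⟩ := d
    obtain ⟨e1, e2⟩ := e
    simp only at t1 t2
    rcases hcr with ⟨c1, c2, c3⟩ | ⟨c1, c2, c3⟩ <;> omega
  exact Finset.Subset.antisymm
    (key T T' hT hT' (hz T h1) (hz T' h2))
    (key T' T hT' hT (hz T' h2) (hz T h1))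

theorem connected {n : ℕ} {T₁ T₂ : Finset (ℕ × ℕ)} (h₁ : IsTriangulation n T₁)
    (h₂ : IsTriangulation n T₂) :
    ∃ (m : ℕ) (g : ℕ → Finset (ℕ × ℕ)), g 0 = T₁ ∧ g m = T₂ ∧
      ∀ i < m, IsFlip n (g i) (g (i + 1)) := by
  obtain ⟨m₁, g₁, hg₁0, hg₁f, hg₁tri, hg₁c⟩ := reach_fan _ T₁ h₁ le_rfl
  obtain ⟨m₂, g₂, hg₂0, hg₂f, hg₂tri, hg₂c⟩ := reach_fan _ T₂ h₂ le_rfl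
  have hFF : g₁ m₁ = g₂ m₂ := fan_unique hg₁tri hg₂tri hg₁c hg₂c
  refine ⟨m₁ + m₂, fun i => if i ≤ m₁ then g₁ i else g₂ (m₁ + m₂ - i),
    by simp [hg₁0], ?_, ?_⟩
  · dsimp only
    rcases Nat.eq_zero_or_pos m₂ with h | h
    · subst h
      simp only [Nat.add_zero, if_pos le_rfl]
      rw [hFF]
      rw [← hg₂0]
    · rw [if_neg (by omega : ¬ m₁ + m₂ ≤ m₁)]
      have : m₁ + m₂ - (m₁ + m₂) = 0 := by omega
      rw [this, hg₂0]
  · intro i hi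
    dsimp only
    by_cases h : i + 1 ≤ m₁
    · rw [if_pos (by omega), if_pos h]
      exact hg₁f i (by omega)
    · by_cases h2 : i ≤ m₁
      · have him : i = m₁ := by omega
        have hm₂ : 1 ≤ m₂ := by omega
        rw [if_pos h2, if_neg h, him, hFF]
        have he1 : m₁ + m₂ - (m₁ + 1) = m₂ - 1 := by omega
        rw [he1]
        have := hg₂f (m₂ - 1) (by omega)
        have he2 : m₂ - 1 + 1 = m₂ := by omega
        rw [he2] at this
        exact isFlip_symm this
      · rw [if_neg h2, if_neg h]
        have := hg₂f (m₁ + m₂ - i - 1) (by omega)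
        have he2 : m₁ + m₂ - i - 1 + 1 = m₁ + m₂ - i := by omega
        rw [he2] at this
        have he3 : m₁ + m₂ - (i + 1) = m₁ + m₂ - i - 1 := by omega
        rw [he3]
        exact isFlip_symm this

theorem path_bound {n : ℕ} {W : ℕ → ℕ → ℕ → ℝ}
    (hcyc : ∀ i j k, W i j k = W j k i)
    (hanti : ∀ i j k, W i j k = -W i k j)
    (htet : ∀ i j k l, i ≤ n + 1 → j ≤ n + 1 → k ≤ n + 1 → l ≤ n + 1 →
      |W i j l + W j k l + W k i l + W k j i| ≤ 1) :
    ∀ (m : ℕ) (g : ℕ → Finset (ℕ × ℕ)), (∀ i < m, IsFlip n (g i) (g (i + 1))) →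
      |weight n W (g 0) - weight n W (g m)| ≤ (m : ℝ) := by
  intro m
  induction m with
  | zero => intro g _; simp
  | succ m ih =>
    intro g hg
    have h1 := ih g (fun i hi => hg i (by omega))
    have h2 := flip_weight hcyc hanti htet (hg m (by omega))
    have h3 : |weight n W (g 0) - weight n W (g (m + 1))| ≤
        |weight n W (g 0) - weight n W (g m)| +
        |weight n W (g m) - weight n W (g (m + 1))| := abs_sub_le _ _ _
    push_cast
    linarith

end FD

/-- If `W` is an antisymmetric weight function on oriented triples of the
vertices of the `(n+2)`-gon satisfying the tetrahedral constraints, and the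
weights of two triangulations `T₁`, `T₂` differ by `D`, then the flip distance
between `T₁` and `T₂` is at least `D`. -/
theorem flipDist_lower_bound (n : ℕ) (W : ℕ → ℕ → ℕ → ℝ)
    (hcyc : ∀ i j k, W i j k = W j k i)
    (hanti : ∀ i j k, W i j k = -W i k j)
    (htet : ∀ i j k l, i ≤ n + 1 → j ≤ n + 1 → k ≤ n + 1 → l ≤ n + 1 →
      |W i j l + W j k l + W k i l + W k j i| ≤ 1)
    (T₁ T₂ : Finset (ℕ × ℕ)) (h₁ : IsTriangulation n T₁)
    (h₂ : IsTriangulation n T₂) (D : ℝ)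
    (hD : |weight n W T₁ - weight n W T₂| = D) :
    D ≤ (flipDist n T₁ T₂ : ℝ) := by
  have hS : {m | ∃ g : ℕ → Finset (ℕ × ℕ), g 0 = T₁ ∧ g m = T₂ ∧
      ∀ i < m, IsFlip n (g i) (g (i + 1))}.Nonempty := by
    obtain ⟨m, g, h0, hm, hf⟩ := FD.connected h₁ h₂
    exact ⟨m, g, h0, hm, hf⟩
  have hmem := Nat.sInf_mem hS
  obtain ⟨g, hg0, hgm, hgf⟩ := hmem
  have hb := FD.path_bound hcyc hanti htet _ g hgf
  rw [hg0, hgm] at hb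
  rw [← hD]
  exact hb
end

section
/- In the sphere triangulation T obtained by gluing the horizontal zig-zag triangulation of an (n+2)-gon with the zig-zag triangulation rotated by ⌊√n⌋ positions, exactly four vertices have degree 4, exactly four have degree 5, and all remaining n - 6 vertices have degree 6 (for n sufficiently large). -/
/-- The diagonals of the (horizontal) zig-zag triangulation of the convex
`(n+2)`-gon with vertices `0, …, n+1`: the path of triangles
`(0,1,n+1), (1,n,n+1), (1,2,n), (2,n-1,n), …` has diagonals
`(j, n+2-j)` (for `2j ≤ n`) and `(j, n+1-j)` (for `2j ≤ n-1`). -/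
lemma mod_two_cases (x m : ℕ) (hm : 0 < m) (hx : x < 2 * m) :
    x % m = if x < m then x else x - m := by
  split_ifs with h
  · exact Nat.mod_eq_of_lt h
  · rw [Nat.mod_eq_sub_mod (by omega)]
    exact Nat.mod_eq_of_lt (by omega)

lemma mod_shift (m r v x : ℕ) (hv : v < m) (hr : r ≤ m) (hx : x < m) :
    (x + r) % m = v ↔ x = (v + m - r) % m := by
  have hm : 0 < m := by omega
  have hw : ((v + m - r) % m + r) % m = v := by
    have h1 : (v + m - r) % m + r ≡ (v + m - r) + r [MOD m] :=
      Nat.ModEq.add_right r (Nat.mod_modEq _ m)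
    have h2 : (v + m - r) + r = v + m := by omega
    calc ((v + m - r) % m + r) % m = ((v + m - r) + r) % m := h1
      _ = (v + m) % m := by rw [h2]
      _ = v % m := by simp [Nat.add_mod_right]
      _ = v := Nat.mod_eq_of_lt hv
  constructor
  · intro h
    have h3 : x + r ≡ (v + m - r) % m + r [MOD m] := by
      unfold Nat.ModEq
      rw [h, hw]
    have h4 : x ≡ (v + m - r) % m [MOD m] := Nat.ModEq.add_right_cancel' r h3
    have h5 : (v + m - r) % m < m := Nat.mod_lt _ hm
    have := Nat.ModEq.eq_of_lt_of_lt h4 hx h5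
    exact this
  · intro h; rw [h]; exact hw

lemma card_filter_two (N : ℕ) (p : ℕ → Prop) [DecidablePred p] (a b : ℕ)
    (hsub : ∀ j, j < N → p j → j = a ∨ j = b) :
    ((Finset.range N).filter p).card
      = if a = b then (if a < N ∧ p a then 1 else 0)
        else (if a < N ∧ p a then 1 else 0) + (if b < N ∧ p b then 1 else 0) := by
  have hset : (Finset.range N).filter p
      = ({a, b} : Finset ℕ).filter (fun j => j < N ∧ p j) := by
    ext j
    simp only [Finset.mem_filter, Finset.mem_range, Finset.mem_insert,
      Finset.mem_singleton]
    constructor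
    · rintro ⟨h1, h2⟩; exact ⟨hsub j h1 h2, h1, h2⟩
    · rintro ⟨_, h1, h2⟩; exact ⟨h1, h2⟩
  rw [hset]
  by_cases hab : a = b
  · subst hab
    rw [if_pos rfl, show ({a, a} : Finset ℕ) = {a} by simp, Finset.filter_singleton]
    split_ifs with h1 <;> simp
  · rw [if_neg hab]
    rw [show ({a, b} : Finset ℕ) = insert a {b} from rfl, Finset.filter_insert,
      Finset.filter_singleton]
    split_ifs with h1 h2 h2 <;>
      simp [Finset.card_insert_of_notMem, Finset.mem_filter, Finset.mem_singleton, hab]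


def zigzag (n : ℕ) : Finset (ℕ × ℕ) :=
  ((Finset.range (n + 2)).filter (fun j => 1 ≤ j ∧ 2 * j ≤ n)).image
      (fun j => (j, n + 2 - j)) ∪
  ((Finset.range (n + 2)).filter (fun j => 1 ≤ j ∧ 2 * j ≤ n - 1)).image
      (fun j => (j, n + 1 - j))

/-- The number of diagonals of the zig-zag triangulation rotated by `r`
positions that are incident to the vertex `v` of the `(n+2)`-gon. -/
def rotZigzagDegree (n r v : ℕ) : ℕ :=
  ((zigzag n).filter
    (fun d => (d.1 + r) % (n + 2) = v ∨ (d.2 + r) % (n + 2) = v)).card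

lemma part_card (n b c v : ℕ) (hv : v < n + 2) (hbc : b + 1 ≤ c) (hc : c ≤ n + 2)
    (hb : 1 ≤ b) :
    ((((Finset.range (n + 2)).filter (fun j => 1 ≤ j ∧ 2 * j ≤ b)).image
        (fun j => (j, c - j))).filter
      (fun d => d.1 % (n + 2) = v ∨ d.2 % (n + 2) = v)).card
    = (if 1 ≤ v ∧ 2 * v ≤ b then 1 else 0) +
      (if v + 1 ≤ c ∧ 2 * c ≤ b + 2 * v then 1 else 0) := by
  rw [Finset.filter_image, Finset.card_image_of_injective _
      (fun x y h => (Prod.mk.injEq _ _ _ _ ▸ h).1), Finset.filter_filter]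
  rw [Finset.filter_congr (q := fun j => (1 ≤ j ∧ 2 * j ≤ b) ∧ (j = v ∨ j = c - v))
    (fun j hj => by
      simp only [Finset.mem_range] at hj
      by_cases h : 1 ≤ j ∧ 2 * j ≤ b
      · rw [Nat.mod_eq_of_lt hj, Nat.mod_eq_of_lt (show c - j < n + 2 by omega)]
        constructor
        · rintro ⟨-, h2⟩; exact ⟨h, by omega⟩
        · rintro ⟨-, h2⟩; exact ⟨h, by omega⟩
      · simp only [h, false_and])]
  rw [card_filter_two (n + 2) _ v (c - v)
    (fun j hj hp => hp.2)]
  split_ifs <;> omega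

lemma D_indicator (n v : ℕ) (hn : 2 ≤ n) (hv : v < n + 2) :
    rotZigzagDegree n 0 v =
      ((if 1 ≤ v ∧ 2 * v ≤ n then 1 else 0) +
       (if v ≤ n + 1 ∧ n + 4 ≤ 2 * v then 1 else 0)) +
      ((if 1 ≤ v ∧ 2 * v ≤ n - 1 then 1 else 0) +
       (if v ≤ n ∧ n + 3 ≤ 2 * v then 1 else 0)) := by
  unfold rotZigzagDegree zigzag
  simp only [Nat.add_zero]
  rw [Finset.filter_union, Finset.card_union_of_disjoint
    (Finset.disjoint_filter_filter (by
      rw [Finset.disjoint_left]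
      rintro ⟨x, y⟩ hx hy
      simp only [Finset.mem_image, Finset.mem_filter, Finset.mem_range,
        Prod.mk.injEq] at hx hy
      obtain ⟨j, ⟨hj1, hj2, hj3⟩, hj4, hj5⟩ := hx
      obtain ⟨k, ⟨hk1, hk2, hk3⟩, hk4, hk5⟩ := hy
      omega))]
  rw [part_card n n (n + 2) v hv (by omega) (by omega) (by omega),
    part_card n (n - 1) (n + 1) v hv (by omega) (by omega) (by omega)]
  have h1 : (v + 1 ≤ n + 2 ∧ 2 * (n + 2) ≤ n + 2 * v) ↔ (v ≤ n + 1 ∧ n + 4 ≤ 2 * v) := by omega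
  have h2 : (v + 1 ≤ n + 1 ∧ 2 * (n + 1) ≤ n - 1 + 2 * v) ↔ (v ≤ n ∧ n + 3 ≤ 2 * v) := by omega
  rw [if_congr h1 rfl rfl, if_congr h2 rfl rfl]

lemma rot_shift (n r v : ℕ) (hr : r ≤ n + 2) (hv : v < n + 2) :
    rotZigzagDegree n r v = rotZigzagDegree n 0 ((v + (n + 2) - r) % (n + 2)) := by
  unfold rotZigzagDegree
  congr 1
  apply Finset.filter_congr
  intro d hd
  have hd1 : d.1 < n + 2 ∧ d.2 < n + 2 := by
    unfold zigzag at hd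
    simp only [Finset.mem_union, Finset.mem_image, Finset.mem_filter,
      Finset.mem_range] at hd
    rcases hd with ⟨j, ⟨hj, h1, h2⟩, rfl⟩ | ⟨j, ⟨hj, h1, h2⟩, rfl⟩ <;>
      exact ⟨by simpa using hj, by simp; omega⟩
  simp only [Nat.add_zero]
  rw [mod_shift (n + 2) r v d.1 hv hr hd1.1, mod_shift (n + 2) r v d.2 hv hr hd1.2,
    Nat.mod_eq_of_lt hd1.1, Nat.mod_eq_of_lt hd1.2]

lemma D_eval (n v : ℕ) (hn : 100 ≤ n) (hv : v < n + 2) :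
    rotZigzagDegree n 0 v =
      if v = 0 ∨ v = n / 2 + 1 then 0
      else if v = n + 1 ∨ v = n / 2 + 2 * (n % 2) then 1 else 2 := by
  rw [D_indicator n v (by omega) hv]
  split_ifs <;> omega


/-- The degree of the vertex `v` in the sphere triangulation `T` obtained by
gluing the zig-zag triangulation (inside) with the zig-zag triangulation
rotated by `⌊√n⌋` positions (outside): two polygon edges plus the incident
diagonals of the two triangulations. -/
def glueDegree (n v : ℕ) : ℕ :=
  2 + rotZigzagDegree n 0 v + rotZigzagDegree n (Nat.sqrt n) v

set_option maxHeartbeats 2000000 in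
/-- For all sufficiently large `n`, in the sphere triangulation obtained by
gluing the zig-zag triangulation of the `(n+2)`-gon with the zig-zag
triangulation rotated by `⌊√n⌋` positions, exactly four vertices have degree
`4`, exactly four have degree `5`, and the remaining `n - 6` vertices have
degree `6`. -/
theorem glued_zigzag_degrees :
    ∃ N : ℕ, ∀ n ≥ N,
      ((Finset.range (n + 2)).filter (fun v => glueDegree n v = 4)).card = 4 ∧
      ((Finset.range (n + 2)).filter (fun v => glueDegree n v = 5)).card = 4 ∧
      ((Finset.range (n + 2)).filter (fun v => glueDegree n v = 6)).card
        = n - 6 := by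
  refine ⟨100, fun n hn => ?_⟩
  set s := Nat.sqrt n with hs_def
  have hs10 : 10 ≤ s := Nat.le_sqrt.mpr (by omega)
  have hssn : s * s ≤ n := Nat.sqrt_le n
  have hlin : 10 * s ≤ n := le_trans (Nat.mul_le_mul_right s hs10) hssn
  have key : ∀ v, v < n + 2 →
      (glueDegree n v = 4 ↔
        (v = 0 ∨ v = n / 2 + 1 ∨ v = s ∨ v = n / 2 + 1 + s)) ∧
      (glueDegree n v = 5 ↔
        (v = n + 1 ∨ v = n / 2 + 2 * (n % 2) ∨ v = s - 1 ∨
          v = n / 2 + 2 * (n % 2) + s)) ∧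
      (glueDegree n v = 6 ↔
        ¬((v = 0 ∨ v = n / 2 + 1 ∨ v = s ∨ v = n / 2 + 1 + s) ∨
          (v = n + 1 ∨ v = n / 2 + 2 * (n % 2) ∨ v = s - 1 ∨
            v = n / 2 + 2 * (n % 2) + s))) := by
    intro v hv
    have e3 : glueDegree n v =
        2 + rotZigzagDegree n 0 v
          + rotZigzagDegree n 0 ((v + (n + 2) - s) % (n + 2)) := by
      unfold glueDegree
      rw [← hs_def, rot_shift n s v (by omega) hv]
    have hw : ((v + (n + 2) - s) % (n + 2) = v + (n + 2) - s ∧ v < s) ∨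
        ((v + (n + 2) - s) % (n + 2) = v - s ∧ s ≤ v) := by
      rcases Nat.lt_or_ge v s with h | h
      · exact Or.inl ⟨Nat.mod_eq_of_lt (by omega), h⟩
      · refine Or.inr ⟨?_, h⟩
        rw [mod_two_cases _ _ (by omega) (by omega)]
        split_ifs with h2 <;> omega
    have e1 := D_eval n v (by omega) hv
    have e2 := D_eval n ((v + (n + 2) - s) % (n + 2)) (by omega)
      (Nat.mod_lt _ (by omega))
    rw [e1, e2] at e3
    rcases hw with ⟨hw2, hvs⟩ | ⟨hw2, hvs⟩ <;> rw [hw2] at e3 <;>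
      refine ⟨?_, ?_, ?_⟩ <;> rw [e3] <;> split_ifs <;> omega
  have h4 : (Finset.range (n + 2)).filter (fun v => glueDegree n v = 4)
      = ({0, n / 2 + 1, s, n / 2 + 1 + s} : Finset ℕ) := by
    ext v
    simp only [Finset.mem_filter, Finset.mem_range, Finset.mem_insert,
      Finset.mem_singleton]
    constructor
    · rintro ⟨hv, h⟩; exact (key v hv).1.mp h
    · intro h
      have hv : v < n + 2 := by omega
      exact ⟨hv, (key v hv).1.mpr h⟩
  have h5 : (Finset.range (n + 2)).filter (fun v => glueDegree n v = 5)
      = ({n + 1, n / 2 + 2 * (n % 2), s - 1, n / 2 + 2 * (n % 2) + s} : Finset ℕ) := by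
    ext v
    simp only [Finset.mem_filter, Finset.mem_range, Finset.mem_insert,
      Finset.mem_singleton]
    constructor
    · rintro ⟨hv, h⟩; exact (key v hv).2.1.mp h
    · intro h
      have hv : v < n + 2 := by omega
      exact ⟨hv, (key v hv).2.1.mpr h⟩
  have card4 : ((Finset.range (n + 2)).filter (fun v => glueDegree n v = 4)).card = 4 := by
    rw [h4, Finset.card_insert_of_notMem (by
        simp only [Finset.mem_insert, Finset.mem_singleton]; omega),
      Finset.card_insert_of_notMem (by
        simp only [Finset.mem_insert, Finset.mem_singleton]; omega),
      Finset.card_insert_of_notMem (by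
        simp only [Finset.mem_singleton]; omega),
      Finset.card_singleton]
  have card5 : ((Finset.range (n + 2)).filter (fun v => glueDegree n v = 5)).card = 4 := by
    rw [h5, Finset.card_insert_of_notMem (by
        simp only [Finset.mem_insert, Finset.mem_singleton]; omega),
      Finset.card_insert_of_notMem (by
        simp only [Finset.mem_insert, Finset.mem_singleton]; omega),
      Finset.card_insert_of_notMem (by
        simp only [Finset.mem_singleton]; omega),
      Finset.card_singleton]
  refine ⟨card4, card5, ?_⟩
  have h6 : (Finset.range (n + 2)).filter (fun v => glueDegree n v = 6)
      = (Finset.range (n + 2)).filter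
          (fun v => ¬(glueDegree n v = 4 ∨ glueDegree n v = 5)) := by
    apply Finset.filter_congr
    intro v hv
    simp only [Finset.mem_range] at hv
    obtain ⟨k4, k5, k6⟩ := key v hv
    rw [k6, k4, k5]
  rw [h6, Finset.filter_not, Finset.card_sdiff_of_subset (Finset.filter_subset _ _),
    Finset.card_range, Finset.filter_or,
    Finset.card_union_of_disjoint (by
      rw [Finset.disjoint_left]
      intro a ha hb
      simp only [Finset.mem_filter] at ha hb
      omega),
    card4, card5]
  omega
end

section
/- (Max-flow min-cut, rational capacities) In a finite directed network with source s, sink t, and nonnegative rational edge capacities, the maximum value of an s-t flow equals the minimum capacity of an s-t cut; in particular, if every s-t cut has capacity at least the value v of the source supply, then there exists a feasible flow of value v. -/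
variable {V : Type*} [Fintype V] [DecidableEq V]

/-- `f` is a feasible `s`–`t` flow for the capacity function `c`: each edge
carries between `0` and its capacity, and flow is conserved at every vertex
other than `s` and `t`. -/
def IsFlow (c : V → V → ℚ) (s t : V) (f : V → V → ℚ) : Prop :=
  (∀ u v, 0 ≤ f u v ∧ f u v ≤ c u v) ∧
  (∀ v, v ≠ s → v ≠ t → ∑ u, f u v = ∑ u, f v u)

/-- The value of a flow `f`: the net flow out of the source `s`. -/
def flowValue (s : V) (f : V → V → ℚ) : ℚ :=
  (∑ u, f s u) - ∑ u, f u s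

/-- `S` is an `s`–`t` cut: it contains `s` but not `t`. -/
def IsCut (s t : V) (S : Finset V) : Prop := s ∈ S ∧ t ∉ S

/-- The capacity of a cut `S`: the total capacity of the edges leaving `S`. -/
def cutCapacity (c : V → V → ℚ) (S : Finset V) : ℚ :=
  ∑ u ∈ S, ∑ v ∈ Sᶜ, c u v

/-!
Ford–Fulkerson. Clearing denominators reduces to integral capacities. Among integral flows
take one of largest value (such values are integers bounded by any cut capacity). If the
residual graph contained an `s`–`t` path, pushing one unit along a simple one would give a
larger integral flow; hence the vertices residually reachable from `s` form a cut whose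
outgoing edges are saturated and whose incoming edges are empty, so its capacity is the flow
value. Weak duality makes this flow maximum and this cut minimum, and scaling the flow by
`v / value` gives a flow of any value `v` up to the minimum cut capacity.
-/

open Finset

theorem Relation.ReflTransGen.exists_nodup_isChain {α : Type*} {r : α → α → Prop} {a b : α}
    (h : Relation.ReflTransGen r a b) :
    ∃ l : List α, (a :: l).Nodup ∧ (a :: l).IsChain r ∧
      (a :: l).getLast (List.cons_ne_nil a l) = b := by
  induction h using Relation.ReflTransGen.head_induction_on with
  | refl => exact ⟨[], List.nodup_singleton _, List.isChain_singleton _, rfl⟩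
  | @head a c hac _ ih =>
    obtain ⟨l, hnd, hch, hlast⟩ := ih
    by_cases ha : a ∈ c :: l
    · -- Cut the loop through `a` by keeping only the suffix starting at `a`.
      obtain ⟨A, D, hAD⟩ := List.append_of_mem ha
      have hsuf : a :: D <:+ c :: l := ⟨A, hAD.symm⟩
      refine ⟨D, hnd.sublist hsuf.sublist, hch.suffix hsuf, ?_⟩
      rw [← hlast]
      simp only [hAD]
      exact (List.getLast_append_of_ne_nil _ _).symm
    · refine ⟨c :: l, List.nodup_cons.2 ⟨ha, hnd⟩, hch.cons ?_, ?_⟩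
      · simpa using hac
      · rw [List.getLast_cons (List.cons_ne_nil c l), hlast]

def netOutflow (f : V → V → ℚ) (x : V) : ℚ :=
  ∑ v, f x v - ∑ v, f v x

omit [DecidableEq V] in
theorem netOutflow_eq_sum (f : V → V → ℚ) (x : V) :
    netOutflow f x = ∑ v, (f x v - f v x) :=
  (sum_sub_distrib _ _).symm

omit [DecidableEq V] in
theorem flowValue_eq_netOutflow (s : V) (f : V → V → ℚ) :
    flowValue s f = netOutflow f s := rfl

omit [DecidableEq V] in
theorem netOutflow_eq_zero_of_isFlow {c f : V → V → ℚ} {s t : V} (hf : IsFlow c s t f) {x : V}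
    (hxs : x ≠ s) (hxt : x ≠ t) : netOutflow f x = 0 := by
  rw [netOutflow, hf.2 x hxs hxt, sub_self]

omit [DecidableEq V] in
theorem netOutflow_add (f g : V → V → ℚ) (x : V) :
    netOutflow (f + g) x = netOutflow f x + netOutflow g x := by
  simp only [netOutflow, Pi.add_apply, sum_add_distrib]
  ring

omit [DecidableEq V] in
theorem netOutflow_smul (a : ℚ) (f : V → V → ℚ) (x : V) :
    netOutflow (a • f) x = a * netOutflow f x := by
  simp only [netOutflow, Pi.smul_apply, smul_eq_mul, ← mul_sum, mul_sub]

omit [DecidableEq V] in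
theorem netOutflow_congr {f g : V → V → ℚ} (h : ∀ u v, f u v - f v u = g u v - g v u) :
    netOutflow f = netOutflow g := by
  ext x
  simp only [netOutflow_eq_sum, h]

/-- Cancelling antiparallel flow is how an augmenting path uses the residual capacity `f v u`
of an edge `u → v`. -/
def netPart (g : V → V → ℚ) (u v : V) : ℚ := max (g u v - g v u) 0

omit [DecidableEq V] in
theorem netOutflow_netPart (g : V → V → ℚ) : netOutflow (netPart g) = netOutflow g :=
  netOutflow_congr fun u v => by
    rw [netPart, netPart, ← neg_sub (g u v), max_zero_sub_eq_self]

theorem sum_netOutflow_eq_sum_compl (f : V → V → ℚ) (S : Finset V) :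
    ∑ x ∈ S, netOutflow f x = ∑ x ∈ S, ∑ v ∈ Sᶜ, (f x v - f v x) := by
  have hinner : ∑ x ∈ S, ∑ v ∈ S, (f x v - f v x) = 0 := by
    simp only [sum_sub_distrib]
    rw [sum_comm, sub_self]
  simp only [netOutflow_eq_sum, ← sum_add_sum_compl S, sum_add_distrib, hinner, zero_add]

theorem flowValue_eq_sum_cut {c f : V → V → ℚ} {s t : V} (hf : IsFlow c s t f) {S : Finset V}
    (hS : IsCut s t S) : flowValue s f = ∑ u ∈ S, ∑ v ∈ Sᶜ, (f u v - f v u) := by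
  rw [← sum_netOutflow_eq_sum_compl, sum_eq_single_of_mem s hS.1]
  · rfl
  · intro x hx hxs
    exact netOutflow_eq_zero_of_isFlow hf hxs fun hxt => hS.2 (hxt ▸ hx)

theorem flowValue_le_cutCapacity {c f : V → V → ℚ} {s t : V} (hf : IsFlow c s t f)
    {S : Finset V} (hS : IsCut s t S) : flowValue s f ≤ cutCapacity c S := by
  rw [flowValue_eq_sum_cut hf hS, cutCapacity]
  gcongr with u _ v _
  linarith [(hf.1 u v).2, (hf.1 v u).1]

omit [DecidableEq V] in
theorem IsFlow.smul {c f : V → V → ℚ} {s t : V} (hf : IsFlow c s t f) {a : ℚ}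
    (ha : 0 ≤ a) :
    IsFlow (a • c) s t (a • f) := by
  refine ⟨fun u v => ?_, fun x hxs hxt => ?_⟩
  · simp only [Pi.smul_apply, smul_eq_mul]
    exact ⟨mul_nonneg ha (hf.1 u v).1, mul_le_mul_of_nonneg_left (hf.1 u v).2 ha⟩
  · simp only [Pi.smul_apply, smul_eq_mul, ← mul_sum, hf.2 x hxs hxt]

omit [DecidableEq V] in
theorem IsFlow.mono {c c' f : V → V → ℚ} {s t : V} (hf : IsFlow c s t f)
    (hc : ∀ u v, c u v ≤ c' u v) : IsFlow c' s t f :=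
  ⟨fun u v => ⟨(hf.1 u v).1, (hf.1 u v).2.trans (hc u v)⟩, hf.2⟩

omit [DecidableEq V] in
theorem flowValue_smul (s : V) (f : V → V → ℚ) (a : ℚ) :
    flowValue s (a • f) = a * flowValue s f :=
  netOutflow_smul a f s

theorem cutCapacity_smul (c : V → V → ℚ) (S : Finset V) (a : ℚ) :
    cutCapacity (a • c) S = a * cutCapacity c S := by
  simp only [cutCapacity, Pi.smul_apply, smul_eq_mul, mul_sum]

def residualCapacity (c f : V → V → ℚ) (u v : V) : ℚ := c u v - f u v + f v u

def ResidualAdj (c f : V → V → ℚ) (u v : V) : Prop := 0 < residualCapacity c f u v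

theorem exists_cut_eq_flowValue_of_not_reachable {c f : V → V → ℚ} {s t : V}
    (hf : IsFlow c s t f) (ht : ¬ Relation.ReflTransGen (ResidualAdj c f) s t) :
    ∃ S, IsCut s t S ∧ flowValue s f = cutCapacity c S := by
  classical
  set R := Relation.ReflTransGen (ResidualAdj c f) s
  have hS : IsCut s t (univ.filter R) := by simpa [IsCut] using ⟨Relation.ReflTransGen.refl, ht⟩
  refine ⟨univ.filter R, hS, ?_⟩
  rw [flowValue_eq_sum_cut hf hS, cutCapacity]
  refine sum_congr rfl fun u hu => sum_congr rfl fun v hv => ?_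
  simp only [mem_compl, mem_filter, mem_univ, true_and] at hu hv
  -- An edge leaving the reachable set has no residual capacity: it is saturated, its reverse empty.
  have hres : residualCapacity c f u v ≤ 0 := not_lt.1 fun h => hv (hu.tail h)
  rw [residualCapacity] at hres
  linarith [(hf.1 u v).2, (hf.1 v u).1]

def pathFlow : V → List V → V → V → ℚ
  | _, [] => 0
  | a, b :: l => (fun u v => if u = a ∧ v = b then 1 else 0) + pathFlow b l

omit [Fintype V] in
theorem pathFlow_eq_zero_of_not_mem {a : V} {l : List V} {u : V} (hu : u ∉ a :: l) (v : V) :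
    pathFlow a l u v = 0 := by
  induction l generalizing a with
  | nil => rfl
  | cons b l ih =>
    simp only [List.mem_cons, not_or] at hu
    simp [pathFlow, hu.1, ih (a := b) (by simpa using hu.2)]

omit [Fintype V] in
theorem pathFlow_eq_zero_or_eq_one {a : V} {l : List V} (hl : (a :: l).Nodup) (u v : V) :
    pathFlow a l u v = 0 ∨ pathFlow a l u v = 1 := by
  induction l generalizing a with
  | nil => exact Or.inl rfl
  | cons b l ih =>
    obtain ⟨ha, hl⟩ := List.nodup_cons.1 hl
    by_cases hua : u = a
    · subst hua
      simp only [pathFlow, Pi.add_apply, pathFlow_eq_zero_of_not_mem ha, add_zero, true_and]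
      split_ifs <;> simp
    · simpa [pathFlow, hua] using ih hl

omit [Fintype V] in
theorem rel_of_pathFlow_ne_zero {r : V → V → Prop} {a : V} {l : List V}
    (hl : (a :: l).IsChain r) {u v : V} (h : pathFlow a l u v ≠ 0) : r u v := by
  induction l generalizing a with
  | nil => exact absurd rfl h
  | cons b l ih =>
    rw [List.isChain_cons_cons] at hl
    by_cases he : u = a ∧ v = b
    · exact he.1 ▸ he.2 ▸ hl.1
    · exact ih hl.2 (by simpa [pathFlow, he] using h)

theorem netOutflow_pathFlow (a : V) (l : List V) (x : V) :
    netOutflow (pathFlow a l) x =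
      (if x = a then 1 else 0) - if x = (a :: l).getLast (List.cons_ne_nil a l) then 1 else 0 := by
  induction l generalizing a with
  | nil => by_cases x = a <;> simp_all [netOutflow, pathFlow]
  | cons b l ih =>
    have hedge : netOutflow (fun u v => if u = a ∧ v = b then (1 : ℚ) else 0) x =
        (if x = a then 1 else 0) - if x = b then 1 else 0 := by
      simp [netOutflow, ite_and, sum_ite_irrel]
    rw [pathFlow, netOutflow_add, hedge, ih, List.getLast_cons (List.cons_ne_nil b l)]
    ring

theorem IsFlow.augment {c f p : V → V → ℚ} {s t : V} (hf : IsFlow c s t f) (hst : s ≠ t)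
    {δ : ℚ} (hδ : 0 ≤ δ) (hp : ∀ u v, 0 ≤ p u v ∧ p u v ≤ 1)
    (hres : ∀ u v, p u v ≠ 0 → δ ≤ residualCapacity c f u v)
    (hnet : ∀ x, netOutflow p x = (if x = s then 1 else 0) - if x = t then 1 else 0) :
    IsFlow c s t (netPart (f + δ • p)) ∧
      flowValue s (netPart (f + δ • p)) = flowValue s f + δ := by
  have hout x : netOutflow (netPart (f + δ • p)) x = netOutflow f x + δ * netOutflow p x := by
    rw [netOutflow_netPart, netOutflow_add, netOutflow_smul]
  refine ⟨⟨fun u v => ⟨le_max_right _ _, max_le ?_ ((hf.1 u v).1.trans (hf.1 u v).2)⟩,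
    fun x hxs hxt => ?_⟩, ?_⟩
  · have hδp : 0 ≤ δ * p v u := mul_nonneg hδ (hp v u).1
    simp only [Pi.add_apply, Pi.smul_apply, smul_eq_mul]
    by_cases hpuv : p u v = 0
    · simp only [hpuv, mul_zero]
      linarith [(hf.1 u v).2, (hf.1 v u).1]
    · have := hres u v hpuv
      rw [residualCapacity] at this
      nlinarith [(hp u v).2, (hf.1 v u).1]
  · have h := hout x
    rw [netOutflow_eq_zero_of_isFlow hf hxs hxt, hnet, if_neg hxs, if_neg hxt] at h
    exact (sub_eq_zero.1 (by simpa [netOutflow] using h)).symm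
  · rw [flowValue_eq_netOutflow, hout, hnet, if_pos rfl, if_neg hst, flowValue_eq_netOutflow]
    ring

omit [DecidableEq V] in
theorem isFlow_zero {c : V → V → ℚ} (hc : ∀ u v, 0 ≤ c u v) (s t : V) : IsFlow c s t 0 :=
  ⟨fun u v => ⟨le_rfl, hc u v⟩, fun _ _ _ => rfl⟩

def IntValued (f : V → V → ℚ) : Prop := ∀ u v, f u v ∈ (Int.castRingHom ℚ).range

theorem one_le_of_pos_of_mem_range_intCast {q : ℚ} (hq : q ∈ (Int.castRingHom ℚ).range)
    (h : 0 < q) : 1 ≤ q := by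
  obtain ⟨z, rfl⟩ := hq
  rw [eq_intCast] at h ⊢
  exact_mod_cast (Int.cast_pos.1 h : 0 < z)

omit [Fintype V] [DecidableEq V] in
theorem IntValued.netPart_add {f g : V → V → ℚ} (hf : IntValued f) (hg : IntValued g) :
    IntValued (netPart (f + g)) := fun u v => by
  rcases max_choice ((f + g) u v - (f + g) v u) 0 with h | h <;> rw [netPart, h]
  · exact sub_mem (add_mem (hf u v) (hg u v)) (add_mem (hf v u) (hg v u))
  · exact zero_mem _

omit [Fintype V] [DecidableEq V] in
theorem IntValued.residualCapacity {c f : V → V → ℚ} (hc : IntValued c) (hf : IntValued f) :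
    IntValued (residualCapacity c f) := fun u v =>
  add_mem (sub_mem (hc u v) (hf u v)) (hf v u)

omit [DecidableEq V] in
theorem exists_pos_smul_intValued (c : V → V → ℚ) :
    ∃ N : ℕ, 0 < N ∧ IntValued ((N : ℚ) • c) := by
  refine ⟨∏ u, ∏ v, (c u v).den, prod_pos fun u _ => prod_pos fun v _ => (c u v).den_pos,
    fun u v => ?_⟩
  obtain ⟨m, hm⟩ := (dvd_prod_of_mem (fun v => (c u v).den) (mem_univ v)).trans
    (dvd_prod_of_mem (fun u => ∏ v, (c u v).den) (mem_univ u))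
  refine ⟨m * (c u v).num, ?_⟩
  simp only [Pi.smul_apply, smul_eq_mul, hm, eq_intCast, Int.cast_mul, Int.cast_natCast,
    Nat.cast_mul]
  rw [← Rat.den_mul_eq_num]
  ring

theorem exists_intValued_flow_succ_of_reachable {c f : V → V → ℚ} {s t : V}
    (hf : IsFlow c s t f) (hst : s ≠ t) (hc : IntValued c) (hfi : IntValued f)
    (hr : Relation.ReflTransGen (ResidualAdj c f) s t) :
    ∃ g, IsFlow c s t g ∧ IntValued g ∧ flowValue s g = flowValue s f + 1 := by
  obtain ⟨l, hnd, hch, hlast⟩ := hr.exists_nodup_isChain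
  have hp := pathFlow_eq_zero_or_eq_one hnd
  have hpi : IntValued (pathFlow s l) := fun u v => by
    rcases hp u v with h | h <;> rw [h]
    exacts [zero_mem _, one_mem _]
  have hres u v (h : pathFlow s l u v ≠ 0) : 1 ≤ residualCapacity c f u v :=
    one_le_of_pos_of_mem_range_intCast (hc.residualCapacity hfi u v)
      (rel_of_pathFlow_ne_zero hch h)
  obtain ⟨hg, hval⟩ := hf.augment hst zero_le_one
    (fun u v => by rcases hp u v with h | h <;> simp [h]) hres
    (fun x => by rw [netOutflow_pathFlow, hlast])
  rw [one_smul] at hg hval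
  exact ⟨_, hg, hfi.netPart_add hpi, hval⟩

theorem exists_flow_eq_cutCapacity_of_intValued {c : V → V → ℚ} (hc : ∀ u v, 0 ≤ c u v)
    (hci : IntValued c) {s t : V} (hst : s ≠ t) :
    ∃ f S, IsFlow c s t f ∧ IsCut s t S ∧ flowValue s f = cutCapacity c S := by
  have hs : IsCut s t {s} := ⟨mem_singleton_self s, by simpa using hst.symm⟩
  obtain ⟨z, ⟨f, hf, hfi, hfz⟩, hmax⟩ := Int.exists_greatest_of_bdd
    (P := fun z : ℤ => ∃ f, IsFlow c s t f ∧ IntValued f ∧ flowValue s f = z)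
    ⟨⌈cutCapacity c {s}⌉, fun z ⟨f, hf, _, hfz⟩ =>
      Int.cast_le.1 (hfz ▸ (flowValue_le_cutCapacity hf hs).trans (Int.le_ceil _))⟩
    ⟨0, 0, isFlow_zero hc s t, fun _ _ => zero_mem _, by simp [flowValue]⟩
  by_cases hr : Relation.ReflTransGen (ResidualAdj c f) s t
  · obtain ⟨g, hg, hgi, hgval⟩ := exists_intValued_flow_succ_of_reachable hf hst hci hfi hr
    have := hmax (z + 1) ⟨g, hg, hgi, by rw [hgval, hfz]; push_cast; ring⟩
    omega
  · exact ⟨f, (exists_cut_eq_flowValue_of_not_reachable hf hr).imp fun _ => .intro hf⟩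

theorem exists_flow_eq_cutCapacity {c : V → V → ℚ} (hc : ∀ u v, 0 ≤ c u v) {s t : V}
    (hst : s ≠ t) :
    ∃ f S, IsFlow c s t f ∧ IsCut s t S ∧ flowValue s f = cutCapacity c S := by
  obtain ⟨N, hN, hNc⟩ := exists_pos_smul_intValued c
  have hN' : (0 : ℚ) < N := Nat.cast_pos.2 hN
  obtain ⟨f, S, hf, hS, hval⟩ :=
    exists_flow_eq_cutCapacity_of_intValued (c := (N : ℚ) • c)
      (fun u v => mul_nonneg hN'.le (hc u v)) hNc hst
  refine ⟨(N : ℚ)⁻¹ • f, S, ?_, hS, ?_⟩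
  · simpa [inv_smul_smul₀ hN'.ne'] using hf.smul (inv_nonneg.2 hN'.le)
  · rw [flowValue_smul, hval, cutCapacity_smul, inv_mul_cancel_left₀ hN'.ne']

/-- Max-flow min-cut with rational capacities: in a finite network with
nonnegative capacities, there exist a flow and a cut with equal value and
capacity, the flow being maximum and the cut minimum; in particular, if every
`s`–`t` cut has capacity at least the (nonnegative) supply `v`, then there is
a feasible flow of value exactly `v`. -/
theorem max_flow_min_cut (c : V → V → ℚ) (hc : ∀ u v, 0 ≤ c u v) (s t : V)
    (hst : s ≠ t) :
    (∃ f S, IsFlow c s t f ∧ IsCut s t S ∧ flowValue s f = cutCapacity c S ∧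
      (∀ g, IsFlow c s t g → flowValue s g ≤ flowValue s f) ∧
      (∀ R, IsCut s t R → cutCapacity c S ≤ cutCapacity c R)) ∧
    (∀ v : ℚ, 0 ≤ v → (∀ S, IsCut s t S → v ≤ cutCapacity c S) →
      ∃ f, IsFlow c s t f ∧ flowValue s f = v) := by
  obtain ⟨f, S, hf, hS, hval⟩ := exists_flow_eq_cutCapacity hc hst
  refine ⟨⟨f, S, hf, hS, hval, fun g hg => (flowValue_le_cutCapacity hg hS).trans_eq hval.symm,
    fun R hR => hval.symm.trans_le (flowValue_le_cutCapacity hf hR)⟩, fun v hv hvS => ?_⟩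
  have hvf : v ≤ flowValue s f := hval ▸ hvS S hS
  have hf0 : 0 ≤ flowValue s f := hv.trans hvf
  refine ⟨(v / flowValue s f) • f, (hf.smul (div_nonneg hv hf0)).mono fun u w => ?_, ?_⟩
  · exact mul_le_of_le_one_left (hc u w) (div_le_one_of_le₀ hvf hf0)
  · rw [flowValue_smul, div_mul_cancel_of_imp fun h => le_antisymm (h ▸ hvf) hv]
end

section
/- Let ∂ be the linear boundary map sending each oriented tetrahedron {i,j,k,l} (with sign) to the formal sum of its four outward-oriented boundary triangles (ijl)+(jkl)+(kil)+(kji), extended linearly to integer combinations of the N = 2·C(n+2,4) oriented tetrahedra. If a sequence of m flips transforms a polygon triangulation T_i into a triangulation T_f, and x_j counts occurrences of oriented tetrahedron j in the sequence, then ∂(x) = T_f - T_i as formal sums of oriented triangles, where m = ∑_j x_j. -/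
/-- The elementary oriented triangle `(i,j,k)` as an element of the free
abelian group of formal sums of oriented triangles, realized as the group of
integer-valued functions on ordered triples which are alternating — so that
`(ijk) = (jki) = (kij) = -(kji)`. -/
def triChain (i j k : ℕ) : ℕ × ℕ × ℕ → ℤ := fun t =>
  if t = (i, j, k) ∨ t = (j, k, i) ∨ t = (k, i, j) then 1
  else if t = (k, j, i) ∨ t = (j, i, k) ∨ t = (i, k, j) then -1 else 0

/-- A triangulation `T`, identified with the formal sum of its
counterclockwise triangles. -/
noncomputable def chainOf (n : ℕ) (T : Finset (ℕ × ℕ)) : ℕ × ℕ × ℕ → ℤ :=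
  fun t => ∑ s ∈ trianglesOf n T, triChain s.1 s.2.1 s.2.2 t

/-- The boundary `∂` of the oriented tetrahedron `((i,j,k,l), ε)`: the formal
sum `(ijl) + (jkl) + (kil) + (kji)` of its four outward-oriented boundary
triangles, with the sign `ε` of the tetrahedron. -/
def tetBoundary (q : (ℕ × ℕ × ℕ × ℕ) × Bool) : ℕ × ℕ × ℕ → ℤ :=
  fun t =>
    (if q.2 then 1 else -1) *
      (triChain q.1.1 q.1.2.1 q.1.2.2.2 t + triChain q.1.2.1 q.1.2.2.1 q.1.2.2.2 t +
        triChain q.1.2.2.1 q.1.1 q.1.2.2.2 t + triChain q.1.2.2.1 q.1.2.1 q.1.1 t)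

/-- The triangulation `T'` is obtained from `T` by the flip associated to the
oriented tetrahedron `q = ((i,j,k,l), ε)` with `i < j < k < l`: the positive
flip replaces the triangles `(ijk), (ikl)` by `(ijl), (jkl)` (exchanging the
diagonal `(i,k)` for `(j,l)`), and the negative flip is its reverse. -/
def IsOrientedFlip (n : ℕ) (q : (ℕ × ℕ × ℕ × ℕ) × Bool)
    (T T' : Finset (ℕ × ℕ)) : Prop :=
  IsTriangulation n T ∧ IsTriangulation n T' ∧
  ∃ i j k l, q.1 = (i, j, k, l) ∧ i < j ∧ j < k ∧ k < l ∧
    (if q.2 then (i, k) ∈ T ∧ T' = insert (j, l) (T.erase (i, k))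
     else (j, l) ∈ T ∧ T' = insert (i, k) (T.erase (j, l)))

lemma crosses_iff (a b c d : ℕ) :
    Crosses (a, b) (c, d) ↔ (a < c ∧ c < b ∧ b < d) ∨ (c < a ∧ a < d ∧ d < b) := Iff.rfl

lemma mem_trianglesOf {n : ℕ} {T : Finset (ℕ × ℕ)} {a b c : ℕ} :
    (a, b, c) ∈ trianglesOf n T ↔
      a < b ∧ b < c ∧ IsEdge n T a b ∧ IsEdge n T b c ∧ IsEdge n T a c := by
  simp only [trianglesOf, Finset.mem_filter, Finset.mem_product, Finset.mem_range]
  constructor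
  · rintro ⟨-, h⟩
    exact h
  · rintro ⟨h1, h2, h3, h4, h5⟩
    have hc : c ≤ n + 1 := h4.1
    exact ⟨⟨by omega, by omega, by omega⟩, h1, h2, h3, h4, h5⟩

lemma edge_not_crosses {n : ℕ} {T : Finset (ℕ × ℕ)} (hT : IsTriangulation n T)
    {a b : ℕ} (he : IsEdge n T a b) {d : ℕ × ℕ} (hd : d ∈ T) : ¬Crosses (a, b) d := by
  obtain ⟨d1, d2⟩ := d
  have hd1 : d1 + 2 ≤ d2 := (hT.1 _ hd).1
  have hd2 : d2 ≤ n + 1 := (hT.1 _ hd).2.1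
  have hb : b ≤ n + 1 := he.1
  rcases he.2 with h | h | h
  · rw [crosses_iff]; omega
  · rw [crosses_iff]; omega
  · exact hT.2.1 _ h _ hd

lemma quad_side {n i j k l : ℕ} {T T' : Finset (ℕ × ℕ)}
    (hT : IsTriangulation n T) (hT' : IsTriangulation n T')
    (hij : i < j) (hjk : j < k) (hkl : k < l)
    (hik : (i, k) ∈ T) (heq : T' = insert (j, l) (T.erase (i, k)))
    {u v : ℕ} (huv : u < v) (hv : v ≤ n + 1)
    (hside : (u, v) = (i, j) ∨ (u, v) = (j, k) ∨ (u, v) = (k, l) ∨ (u, v) = (i, l)) :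
    IsEdge n T u v := by
  by_contra hne
  have hdiag : IsDiagonal n (u, v) := by
    refine ⟨?_, hv, ?_⟩
    · rcases Nat.lt_or_ge (u + 1) v with h | h
      · omega
      · exact absurd ⟨hv, Or.inl (by omega)⟩ hne
    · rintro ⟨h0, h1⟩
      exact hne ⟨hv, Or.inr (Or.inl ⟨h0, h1⟩)⟩
  have huvT : (u, v) ∉ T := fun h => hne ⟨hv, Or.inr (Or.inr h)⟩
  obtain ⟨e, heT, hcr⟩ := hT.2.2 _ hdiag huvT
  obtain ⟨a, b⟩ := e
  have hab : a + 2 ≤ b := (hT.1 _ heT).1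
  rw [crosses_iff] at hcr
  have hq : Crosses (a, b) (i, k) ∨ Crosses (a, b) (j, l) := by
    rw [crosses_iff, crosses_iff]
    rcases hside with h | h | h | h <;> rw [Prod.mk.injEq] at h <;> omega
  rcases hq with hq | hq
  · exact hT.2.1 _ heT _ hik hq
  · have hne_ik : (a, b) ≠ (i, k) := by
      simp only [ne_eq, Prod.mk.injEq]
      rcases hside with h | h | h | h <;> rw [Prod.mk.injEq] at h <;> omega
    have heT' : (a, b) ∈ T' := by
      rw [heq, Finset.mem_insert, Finset.mem_erase]
      exact Or.inr ⟨hne_ik, heT⟩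
    have hjlT' : (j, l) ∈ T' := by rw [heq]; exact Finset.mem_insert_self _ _
    exact hT'.2.1 _ heT' _ hjlT' hq

lemma edge_iff {n i j k l : ℕ} {T T' : Finset (ℕ × ℕ)}
    (hT : IsTriangulation n T) (hT' : IsTriangulation n T')
    (hij : i < j) (hjk : j < k) (hkl : k < l)
    (hik : (i, k) ∈ T) (heq : T' = insert (j, l) (T.erase (i, k)))
    (a b : ℕ) :
    IsEdge n T' a b ↔ ((IsEdge n T a b ∧ (a, b) ≠ (i, k)) ∨ (a, b) = (j, l)) := by
  have hik2 : i + 2 ≤ k := (hT.1 _ hik).1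
  have hkn : k ≤ n + 1 := (hT.1 _ hik).2.1
  have hik0 : ¬(i = 0 ∧ k = n + 1) := (hT.1 _ hik).2.2
  have hjlT' : (j, l) ∈ T' := by rw [heq]; exact Finset.mem_insert_self _ _
  have hln : l ≤ n + 1 := (hT'.1 _ hjlT').2.1
  constructor
  · rintro ⟨hb, h | h | h⟩
    · refine Or.inl ⟨⟨hb, Or.inl h⟩, ?_⟩
      simp only [ne_eq, Prod.mk.injEq]; omega
    · refine Or.inl ⟨⟨hb, Or.inr (Or.inl h)⟩, ?_⟩
      simp only [ne_eq, Prod.mk.injEq]; omega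
    · rw [heq, Finset.mem_insert, Finset.mem_erase] at h
      rcases h with h | ⟨hne, hmem⟩
      · exact Or.inr h
      · exact Or.inl ⟨⟨hb, Or.inr (Or.inr hmem)⟩, hne⟩
  · rintro (⟨⟨hb, hE⟩, hne⟩ | h)
    · refine ⟨hb, ?_⟩
      rcases hE with h | h | h
      · exact Or.inl h
      · exact Or.inr (Or.inl h)
      · refine Or.inr (Or.inr ?_)
        rw [heq, Finset.mem_insert, Finset.mem_erase]
        exact Or.inr ⟨hne, h⟩
    · rw [Prod.mk.injEq] at h
      refine ⟨by omega, Or.inr (Or.inr ?_)⟩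
      rw [heq, Finset.mem_insert]
      left
      rw [Prod.mk.injEq]; omega
lemma triChain_swap (a b c : ℕ) (h1 : a ≠ b) (h2 : b ≠ c) (h3 : a ≠ c) (t : ℕ × ℕ × ℕ) :
    triChain b a c t = - triChain a b c t := by
  have hPQ : ¬((t = (b,a,c) ∨ t = (a,c,b) ∨ t = (c,b,a)) ∧
      (t = (a,b,c) ∨ t = (b,c,a) ∨ t = (c,a,b))) := by
    obtain ⟨x,y,z⟩ := t
    simp only [Prod.mk.injEq]
    omega
  unfold triChain
  by_cases hP : t = (b,a,c) ∨ t = (a,c,b) ∨ t = (c,b,a) <;>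
    by_cases hQ : t = (a,b,c) ∨ t = (b,c,a) ∨ t = (c,a,b)
  · exact absurd ⟨hP, hQ⟩ hPQ
  · rw [if_pos hP, if_neg hQ,
      if_pos (show t = (c,b,a) ∨ t = (b,a,c) ∨ t = (a,c,b) by tauto)]
    try norm_num
  · rw [if_neg hP, if_pos (show t = (c,a,b) ∨ t = (a,b,c) ∨ t = (b,c,a) by tauto), if_pos hQ]
    try norm_num
  · rw [if_neg hP, if_neg hQ,
      if_neg (show ¬(t = (c,a,b) ∨ t = (a,b,c) ∨ t = (b,c,a)) by tauto),
      if_neg (show ¬(t = (c,b,a) ∨ t = (b,a,c) ∨ t = (a,c,b)) by tauto)]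
    try norm_num

lemma triChain_rev (a b c : ℕ) (h1 : a ≠ b) (h2 : b ≠ c) (h3 : a ≠ c) (t : ℕ × ℕ × ℕ) :
    triChain c b a t = - triChain a b c t := by
  have hPQ : ¬((t = (c,b,a) ∨ t = (b,a,c) ∨ t = (a,c,b)) ∧
      (t = (a,b,c) ∨ t = (b,c,a) ∨ t = (c,a,b))) := by
    obtain ⟨x,y,z⟩ := t
    simp only [Prod.mk.injEq]
    omega
  unfold triChain
  by_cases hP : t = (c,b,a) ∨ t = (b,a,c) ∨ t = (a,c,b) <;>
    by_cases hQ : t = (a,b,c) ∨ t = (b,c,a) ∨ t = (c,a,b)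
  · exact absurd ⟨hP, hQ⟩ hPQ
  · rw [if_pos hP, if_neg hQ,
      if_pos (show t = (c,b,a) ∨ t = (b,a,c) ∨ t = (a,c,b) by tauto)]
    try norm_num
  · rw [if_neg hP, if_pos (show t = (a,b,c) ∨ t = (b,c,a) ∨ t = (c,a,b) by tauto), if_pos hQ]
    try norm_num
  · rw [if_neg hP, if_neg hQ,
      if_neg (show ¬(t = (a,b,c) ∨ t = (b,c,a) ∨ t = (c,a,b)) by tauto),
      if_neg (show ¬(t = (c,b,a) ∨ t = (b,a,c) ∨ t = (a,c,b)) by tauto)]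
    try norm_num

lemma tri_iff {n i j k l : ℕ} {T T' : Finset (ℕ × ℕ)}
    (hT : IsTriangulation n T) (hT' : IsTriangulation n T')
    (hij : i < j) (hjk : j < k) (hkl : k < l)
    (hik : (i, k) ∈ T) (heq : T' = insert (j, l) (T.erase (i, k)))
    (a b c : ℕ) :
    (a, b, c) ∈ trianglesOf n T' ↔
      ((a, b, c) = (i, j, l) ∨ (a, b, c) = (j, k, l) ∨
        ((a, b, c) ∈ trianglesOf n T ∧ (a, b, c) ≠ (i, j, k) ∧ (a, b, c) ≠ (i, k, l))) := by
  have hE := edge_iff hT hT' hij hjk hkl hik heq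
  have hik2 : i + 2 ≤ k := (hT.1 _ hik).1
  have hkn : k ≤ n + 1 := (hT.1 _ hik).2.1
  have hjlT' : (j, l) ∈ T' := by rw [heq]; exact Finset.mem_insert_self _ _
  have hjl2 : j + 2 ≤ l := (hT'.1 _ hjlT').1
  have hln : l ≤ n + 1 := (hT'.1 _ hjlT').2.1
  have hEij : IsEdge n T i j :=
    quad_side hT hT' hij hjk hkl hik heq hij (by omega) (Or.inl rfl)
  have hEjk : IsEdge n T j k :=
    quad_side hT hT' hij hjk hkl hik heq hjk (by omega) (Or.inr (Or.inl rfl))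
  have hEkl : IsEdge n T k l :=
    quad_side hT hT' hij hjk hkl hik heq hkl (by omega) (Or.inr (Or.inr (Or.inl rfl)))
  have hEil : IsEdge n T i l :=
    quad_side hT hT' hij hjk hkl hik heq (by omega) (by omega) (Or.inr (Or.inr (Or.inr rfl)))
  constructor
  · intro h
    rw [mem_trianglesOf] at h
    obtain ⟨hab, hbc, e1, e2, e3⟩ := h
    rcases (hE a b).mp e1 with ⟨eab, nab⟩ | h1 <;>
      rcases (hE b c).mp e2 with ⟨ebc, nbc⟩ | h2 <;>
      rcases (hE a c).mp e3 with ⟨eac, nac⟩ | h3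
    · refine Or.inr (Or.inr ⟨mem_trianglesOf.mpr ⟨hab, hbc, eab, ebc, eac⟩, ?_, ?_⟩)
      · intro h'
        simp only [Prod.mk.injEq] at h'
        exact nac (by rw [Prod.mk.injEq]; omega)
      · intro h'
        simp only [Prod.mk.injEq] at h'
        exact nab (by rw [Prod.mk.injEq]; omega)
    · -- (a,c) = (j,l)
      rw [Prod.mk.injEq] at h3
      rcases Nat.lt_trichotomy b k with hb | hb | hb
      · exact absurd (by rw [crosses_iff]; omega) (edge_not_crosses hT ebc hik)
      · exact Or.inr (Or.inl (by simp only [Prod.mk.injEq]; omega))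
      · exact absurd (by rw [crosses_iff]; omega) (edge_not_crosses hT eab hik)
    · -- (b,c) = (j,l)
      rw [Prod.mk.injEq] at h2
      rcases Nat.lt_trichotomy a i with ha | ha | ha
      · exact absurd (by rw [crosses_iff]; omega) (edge_not_crosses hT eab hik)
      · exact Or.inl (by simp only [Prod.mk.injEq]; omega)
      · exact absurd (by rw [crosses_iff]; omega) (edge_not_crosses hT eac hik)
    · rw [Prod.mk.injEq] at h2 h3; omega
    · -- (a,b) = (j,l)
      rw [Prod.mk.injEq] at h1
      exact absurd (by rw [crosses_iff]; omega) (edge_not_crosses hT eac hik)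
    · rw [Prod.mk.injEq] at h1 h3; omega
    · rw [Prod.mk.injEq] at h1 h2; omega
    · rw [Prod.mk.injEq] at h1 h2; omega
  · rintro (h | h | ⟨hmem, hne1, hne2⟩)
    · rw [h]
      refine mem_trianglesOf.mpr ⟨hij, by omega, ?_, ?_, ?_⟩
      · exact (hE i j).mpr (Or.inl ⟨hEij, by simp only [ne_eq, Prod.mk.injEq]; omega⟩)
      · exact (hE j l).mpr (Or.inr rfl)
      · exact (hE i l).mpr (Or.inl ⟨hEil, by simp only [ne_eq, Prod.mk.injEq]; omega⟩)
    · rw [h]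
      refine mem_trianglesOf.mpr ⟨hjk, hkl, ?_, ?_, ?_⟩
      · exact (hE j k).mpr (Or.inl ⟨hEjk, by simp only [ne_eq, Prod.mk.injEq]; omega⟩)
      · exact (hE k l).mpr (Or.inl ⟨hEkl, by simp only [ne_eq, Prod.mk.injEq]; omega⟩)
      · exact (hE j l).mpr (Or.inr rfl)
    · rw [mem_trianglesOf] at hmem
      obtain ⟨hab, hbc, eab, ebc, eac⟩ := hmem
      have nab : (a, b) ≠ (i, k) := by
        intro h'
        rw [Prod.mk.injEq] at h'
        rcases Nat.lt_trichotomy c l with hc | hc | hc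
        · have eacT' : IsEdge n T' a c :=
            (hE a c).mpr (Or.inl ⟨eac, by simp only [ne_eq, Prod.mk.injEq]; omega⟩)
          exact absurd (by rw [crosses_iff]; omega) (edge_not_crosses hT' eacT' hjlT')
        · exact hne2 (by simp only [Prod.mk.injEq]; omega)
        · have ebcT' : IsEdge n T' b c :=
            (hE b c).mpr (Or.inl ⟨ebc, by simp only [ne_eq, Prod.mk.injEq]; omega⟩)
          exact absurd (by rw [crosses_iff]; omega) (edge_not_crosses hT' ebcT' hjlT')
      have nbc : (b, c) ≠ (i, k) := by
        intro h'
        rw [Prod.mk.injEq] at h'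
        have eacT' : IsEdge n T' a c :=
          (hE a c).mpr (Or.inl ⟨eac, by simp only [ne_eq, Prod.mk.injEq]; omega⟩)
        exact absurd (by rw [crosses_iff]; omega) (edge_not_crosses hT' eacT' hjlT')
      have nac : (a, c) ≠ (i, k) := by
        intro h'
        rw [Prod.mk.injEq] at h'
        rcases Nat.lt_trichotomy b j with hb | hb | hb
        · have ebcT' : IsEdge n T' b c :=
            (hE b c).mpr (Or.inl ⟨ebc, by simp only [ne_eq, Prod.mk.injEq]; omega⟩)
          exact absurd (by rw [crosses_iff]; omega) (edge_not_crosses hT' ebcT' hjlT')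
        · exact hne1 (by simp only [Prod.mk.injEq]; omega)
        · have eabT' : IsEdge n T' a b :=
            (hE a b).mpr (Or.inl ⟨eab, by simp only [ne_eq, Prod.mk.injEq]; omega⟩)
          exact absurd (by rw [crosses_iff]; omega) (edge_not_crosses hT' eabT' hjlT')
      exact mem_trianglesOf.mpr ⟨hab, hbc,
        (hE a b).mpr (Or.inl ⟨eab, nab⟩),
        (hE b c).mpr (Or.inl ⟨ebc, nbc⟩),
        (hE a c).mpr (Or.inl ⟨eac, nac⟩)⟩

lemma flip_chain {n i j k l : ℕ} {T T' : Finset (ℕ × ℕ)}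
    (hT : IsTriangulation n T) (hT' : IsTriangulation n T')
    (hij : i < j) (hjk : j < k) (hkl : k < l)
    (hik : (i, k) ∈ T) (heq : T' = insert (j, l) (T.erase (i, k)))
    (t : ℕ × ℕ × ℕ) :
    chainOf n T' t = chainOf n T t - triChain i j k t - triChain i k l t
      + triChain i j l t + triChain j k l t := by
  classical
  have hset : trianglesOf n T' =
      insert (i,j,l) (insert (j,k,l) (((trianglesOf n T).erase (i,j,k)).erase (i,k,l))) := by
    ext ⟨a, b, c⟩
    rw [tri_iff hT hT' hij hjk hkl hik heq]
    simp only [Finset.mem_insert, Finset.mem_erase]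
    tauto
  have hjl_not_T : (j, l) ∉ T := fun h => hT.2.1 _ hik _ h (Or.inl ⟨hij, hjk, hkl⟩)
  have hjlT' : (j, l) ∈ T' := by rw [heq]; exact Finset.mem_insert_self _ _
  have hjl2 : j + 2 ≤ l := (hT'.1 _ hjlT').1
  have hln : l ≤ n + 1 := (hT'.1 _ hjlT').2.1
  have hik2 : i + 2 ≤ k := (hT.1 _ hik).1
  have hkn : k ≤ n + 1 := (hT.1 _ hik).2.1
  have hEij : IsEdge n T i j :=
    quad_side hT hT' hij hjk hkl hik heq hij (by omega) (Or.inl rfl)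
  have hEjk : IsEdge n T j k :=
    quad_side hT hT' hij hjk hkl hik heq hjk (by omega) (Or.inr (Or.inl rfl))
  have hEkl : IsEdge n T k l :=
    quad_side hT hT' hij hjk hkl hik heq hkl (by omega) (Or.inr (Or.inr (Or.inl rfl)))
  have hEil : IsEdge n T i l :=
    quad_side hT hT' hij hjk hkl hik heq (by omega) (by omega) (Or.inr (Or.inr (Or.inr rfl)))
  have hm1 : (i,j,k) ∈ trianglesOf n T :=
    mem_trianglesOf.mpr ⟨hij, hjk, hEij, hEjk, ⟨hkn, Or.inr (Or.inr hik)⟩⟩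
  have hm2 : (i,k,l) ∈ trianglesOf n T :=
    mem_trianglesOf.mpr ⟨by omega, hkl, ⟨hkn, Or.inr (Or.inr hik)⟩, hEkl, hEil⟩
  have hn1 : (i,j,l) ∉ trianglesOf n T := by
    intro h
    have h' := (mem_trianglesOf.mp h).2.2.2.1
    rcases h'.2 with h'' | h'' | h''
    · omega
    · omega
    · exact hjl_not_T h''
  have hn2 : (j,k,l) ∉ trianglesOf n T := by
    intro h
    have h' := (mem_trianglesOf.mp h).2.2.2.2
    rcases h'.2 with h'' | h'' | h''
    · omega
    · omega
    · exact hjl_not_T h''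
  have key : ∀ f : ℕ × ℕ × ℕ → ℤ, ∑ s ∈ trianglesOf n T', f s =
      f (i,j,l) + f (j,k,l) + (∑ s ∈ trianglesOf n T, f s) - f (i,j,k) - f (i,k,l) := by
    intro f
    rw [hset,
      Finset.sum_insert (by
        simp only [Finset.mem_insert, Finset.mem_erase]
        rintro (h | ⟨-, -, h⟩)
        · simp only [Prod.mk.injEq] at h; omega
        · exact hn1 h),
      Finset.sum_insert (by
        simp only [Finset.mem_erase]
        rintro ⟨-, -, h⟩
        exact hn2 h),
      Finset.sum_erase_eq_sub (Finset.mem_erase.mpr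
        ⟨by simp only [ne_eq, Prod.mk.injEq]; omega, hm2⟩),
      Finset.sum_erase_eq_sub hm1]
    ring
  unfold chainOf
  rw [key (fun s => triChain s.1 s.2.1 s.2.2 t)]
  ring

lemma flip_boundary {n : ℕ} {qq : (ℕ × ℕ × ℕ × ℕ) × Bool} {T T' : Finset (ℕ × ℕ)}
    (h : IsOrientedFlip n qq T T') (t : ℕ × ℕ × ℕ) :
    tetBoundary qq t = chainOf n T' t - chainOf n T t := by
  obtain ⟨p, ε⟩ := qq
  obtain ⟨hT, hT', i, j, k, l, hq1, hij, hjk, hkl, hc⟩ := h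
  have hq1' : p = (i, j, k, l) := hq1
  subst hq1'
  cases ε
  · have hc' : (j, l) ∈ T ∧ T' = insert (i, k) (T.erase (j, l)) := hc
    obtain ⟨hjlT, heq⟩ := hc'
    have hikT : (i, k) ∉ T := fun h' => hT.2.1 _ h' _ hjlT (Or.inl ⟨hij, hjk, hkl⟩)
    have hikT' : (i, k) ∈ T' := by rw [heq]; exact Finset.mem_insert_self _ _
    have heq' : T = insert (j, l) (T'.erase (i, k)) := by
      rw [heq, Finset.erase_insert (fun h' => hikT (Finset.mem_of_mem_erase h')),
        Finset.insert_erase hjlT]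
    have hchain := flip_chain hT' hT hij hjk hkl hikT' heq' t
    have hb : tetBoundary ((i, j, k, l), false) t =
        -1 * (triChain i j l t + triChain j k l t + triChain k i l t + triChain k j i t) := rfl
    rw [hb, triChain_swap i k l (by omega) (by omega) (by omega) t,
      triChain_rev i j k (by omega) (by omega) (by omega) t]
    linear_combination hchain
  · have hc' : (i, k) ∈ T ∧ T' = insert (j, l) (T.erase (i, k)) := hc
    obtain ⟨hikT, heq⟩ := hc'
    have hchain := flip_chain hT hT' hij hjk hkl hikT heq t
    have hb : tetBoundary ((i, j, k, l), true) t =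
        1 * (triChain i j l t + triChain j k l t + triChain k i l t + triChain k j i t) := rfl
    rw [hb, triChain_swap i k l (by omega) (by omega) (by omega) t,
      triChain_rev i j k (by omega) (by omega) (by omega) t]
    linear_combination -hchain


open Classical in
/-- If a sequence of `m` flips transforms the triangulation `T_i = Ts 0` of
the `(n+2)`-gon into `T_f = Ts m`, the flip at step `s` being the oriented
tetrahedron `q s`, and `x j` counts the occurrences of the oriented
tetrahedron `j` in the sequence, then `∂ x = T_f - T_i` as formal sums of
oriented triangles, where `m = ∑ j, x j`. -/
theorem boundary_of_flip_sequence (n m : ℕ) (Ts : ℕ → Finset (ℕ × ℕ))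
    (q : ℕ → (ℕ × ℕ × ℕ × ℕ) × Bool)
    (hstep : ∀ s < m, IsOrientedFlip n (q s) (Ts s) (Ts (s + 1)))
    (x : (ℕ × ℕ × ℕ × ℕ) × Bool → ℕ)
    (hx : ∀ j, x j = ((Finset.range m).filter (fun s => q s = j)).card) :
    (∀ t, ∑ j ∈ (Finset.range m).image q, (x j : ℤ) * tetBoundary j t
        = chainOf n (Ts m) t - chainOf n (Ts 0) t) ∧
    m = ∑ j ∈ (Finset.range m).image q, x j := by
  have tele : ∀ m', m' ≤ m → ∀ t, ∑ s ∈ Finset.range m', tetBoundary (q s) t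
      = chainOf n (Ts m') t - chainOf n (Ts 0) t := by
    intro m'
    induction m' with
    | zero => intro _ t; simp
    | succ m' ih =>
      intro hm t
      rw [Finset.sum_range_succ, ih (by omega) t,
        flip_boundary (hstep m' (by omega)) t]
      ring
  constructor
  · intro t
    calc ∑ jj ∈ (Finset.range m).image q, (x jj : ℤ) * tetBoundary jj t
        = ∑ jj ∈ (Finset.range m).image q,
            (((Finset.range m).filter fun s => q s = jj).card) • tetBoundary jj t := by
          refine Finset.sum_congr rfl fun jj _ => ?_
          rw [hx jj, nsmul_eq_mul]
      _ = ∑ s ∈ Finset.range m, tetBoundary (q s) t :=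
          (Finset.sum_comp (fun jj => tetBoundary jj t) q).symm
      _ = chainOf n (Ts m) t - chainOf n (Ts 0) t := tele m le_rfl t
  · exact (Finset.card_range m ▸ Finset.card_eq_sum_card_image q (Finset.range m)).trans
      (Finset.sum_congr rfl fun jj _ => (hx jj).symm)
end

section
/- If an antisymmetric weight function W on oriented triples of the vertices of an (n+2)-gon satisfies the tetrahedral constraints and there exist two triangulations T_i, T_f with W(T_i) - W(T_f) = 2n - 6, then the diameter of the flip graph on triangulations of the (n+2)-gon is at least 2n - 6. -/
open Finset Relation

variable {n : ℕ} {T T₁ T₂ : Finset (ℕ × ℕ)} {a b c d p q x y : ℕ}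

theorem crosses_comm {d e : ℕ × ℕ} : Crosses d e ↔ Crosses e d := Or.comm

theorem IsTriangulation.isDiagonal_of_mem (hT : IsTriangulation n T) (h : (a, b) ∈ T) :
    a + 2 ≤ b ∧ b ≤ n + 1 ∧ ¬(a = 0 ∧ b = n + 1) :=
  hT.1 _ h

theorem IsTriangulation.isEdge_of_mem (hT : IsTriangulation n T) (h : (a, b) ∈ T) :
    IsEdge n T a b :=
  ⟨(hT.isDiagonal_of_mem h).2.1, Or.inr (Or.inr h)⟩

theorem IsEdge.mem_of_isDiagonal (h : IsEdge n T a b) (hab : a + 2 ≤ b)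
    (hab' : ¬(a = 0 ∧ b = n + 1)) : (a, b) ∈ T := by
  rcases h.2 with h | h | h
  · omega
  · exact absurd h hab'
  · exact h

/-- Polygon sides, including `(0, n + 1)`, cannot be crossed. -/
theorem IsEdge.mem_of_crosses (h : IsEdge n T c d) (hc : Crosses (a, b) (c, d))
    (hb : b ≤ n + 1) : (c, d) ∈ T := by
  simp only [Crosses] at hc
  exact h.mem_of_isDiagonal (by omega) (by omega)

theorem IsEdge.of_erase_eq {e f : ℕ × ℕ} (hE : T₁.erase e = T₂.erase f) (h : IsEdge n T₁ a b)
    (hne : (a, b) ≠ e) : IsEdge n T₂ a b := by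
  refine ⟨h.1, h.2.imp_right (Or.imp_right fun hm => ?_)⟩
  exact (mem_erase.1 (hE ▸ mem_erase.2 ⟨hne, hm⟩)).2

theorem IsTriangulation.not_crosses (hT : IsTriangulation n T) (h₁ : IsEdge n T a b)
    (h₂ : IsEdge n T c d) : ¬Crosses (a, b) (c, d) := fun hc =>
  hT.2.1 _ (h₁.mem_of_crosses (crosses_comm.1 hc) h₂.1) _ (h₂.mem_of_crosses hc h₁.1) hc

theorem IsTriangulation.exists_inner_apex (hT : IsTriangulation n T) (h : IsEdge n T a b)
    (hab : a + 2 ≤ b) : ∃ p, a < p ∧ p < b ∧ IsEdge n T a p ∧ IsEdge n T p b := by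
  classical
  set p := Nat.findGreatest (fun c => a < c ∧ IsEdge n T a c) (b - 1)
  have hp : a < p ∧ IsEdge n T a p :=
    Nat.findGreatest_spec (P := fun c => a < c ∧ IsEdge n T a c) (m := a + 1) (by omega)
      ⟨by omega, by have := h.1; omega, Or.inl rfl⟩
  have hpb : p < b := (Nat.findGreatest_le _).trans_lt (by omega)
  refine ⟨p, hp.1, hpb, hp.2, ?_⟩
  by_contra hpb'
  have hp2 : p + 2 ≤ b := by
    by_contra
    exact hpb' ⟨h.1, Or.inl (by omega)⟩
  obtain ⟨⟨u, v⟩, huv, hc⟩ :=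
    hT.2.2 (p, b) ⟨hp2, h.1, by omega⟩ fun hm => hpb' ⟨h.1, Or.inr (Or.inr hm)⟩
  have huv' := hT.isEdge_of_mem huv
  have h₁ := hT.not_crosses h huv'
  have h₂ := hT.not_crosses hp.2 huv'
  -- the maximality of `p` excludes a diagonal from `a` ending between `p` and `b`
  have h₃ : ¬(u = a ∧ p < v ∧ v < b) := by
    rintro ⟨rfl, hpv, hvb⟩
    have := Nat.le_findGreatest (P := fun c => u < c ∧ IsEdge n T u c) (n := b - 1) (by omega)
      ⟨by omega, huv'⟩
    omega
  simp only [Crosses] at hc h₁ h₂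
  omega

/-- The apex outside `(a, b)` comes from the shortest edge enclosing `(a, b)`. -/
theorem IsTriangulation.exists_outer_apex (hT : IsTriangulation n T) (h : (a, b) ∈ T) :
    ∃ q, (q < a ∧ IsEdge n T q a ∧ IsEdge n T q b) ∨
      (b < q ∧ IsEdge n T a q ∧ IsEdge n T b q) := by
  classical
  have hd := hT.isDiagonal_of_mem h
  have hex : ∃ k, ∃ u v, IsEdge n T u v ∧ u ≤ a ∧ b ≤ v ∧ ¬(u = a ∧ v = b) ∧ v - u = k :=
    ⟨_, 0, n + 1, ⟨le_rfl, Or.inr (Or.inl ⟨rfl, rfl⟩)⟩, by omega, hd.2.1, by omega, rfl⟩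
  obtain ⟨u, v, huv, hua, hbv, hne, hk⟩ := Nat.find_spec hex
  have hmin {u' v'} (h' : IsEdge n T u' v') (hu : u' ≤ a) (hv : b ≤ v')
      (hne : ¬(u' = a ∧ v' = b)) : v - u ≤ v' - u' :=
    hk ▸ Nat.find_min' hex ⟨u', v', h', hu, hv, hne, rfl⟩
  obtain ⟨p, hup, hpv, hu_p, hp_v⟩ := hT.exists_inner_apex huv (by omega)
  have h₁ := hT.not_crosses (hT.isEdge_of_mem h) hu_p
  have h₂ := hT.not_crosses (hT.isEdge_of_mem h) hp_v
  have h₃ : ¬(u ≤ a ∧ b ≤ p ∧ ¬(u = a ∧ p = b)) := fun H => by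
    have := hmin hu_p H.1 H.2.1 H.2.2
    omega
  have h₄ : ¬(p ≤ a ∧ b ≤ v ∧ ¬(p = a ∧ v = b)) := fun H => by
    have := hmin hp_v H.1 H.2.1 H.2.2
    omega
  simp only [Crosses] at h₁ h₂
  rcases (by omega : (p = a ∧ v = b) ∨ (p = b ∧ u = a)) with ⟨rfl, rfl⟩ | ⟨rfl, rfl⟩
  · exact ⟨u, Or.inl ⟨hup, hu_p, huv⟩⟩
  · exact ⟨v, Or.inr ⟨hpv, huv, hp_v⟩⟩

theorem IsFlip.exists_crosses (h : IsFlip n T₁ T₂) : ∃ a b x y, (a, b) ∈ T₁ ∧ (x, y) ∈ T₂ ∧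
    T₁.erase (a, b) = T₂.erase (x, y) ∧ Crosses (a, b) (x, y) := by
  obtain ⟨hT₁, hT₂, ⟨a, b⟩, ⟨x, y⟩, hab, hxy, rfl⟩ := h
  refine ⟨a, b, x, y, hab, mem_insert_self _ _,
    (erase_insert fun h => hxy (mem_of_mem_erase h)).symm, ?_⟩
  obtain ⟨g, hg, hc⟩ := hT₁.2.2 _ (hT₂.1 _ (mem_insert_self _ _)) hxy
  by_cases hga : g = (a, b)
  · exact crosses_comm.1 (hga ▸ hc)
  · exact absurd hc (hT₂.2.1 _ (mem_insert_self _ _) _ (mem_insert_of_mem (mem_erase.2 ⟨hga, hg⟩)))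

theorem IsFlip.symm (h : IsFlip n T₁ T₂) : IsFlip n T₂ T₁ := by
  obtain ⟨a, b, x, y, hab, hxy, hE, hc⟩ := h.exists_crosses
  exact ⟨h.2.1, h.1, (x, y), (a, b), hxy, fun hab₂ => h.2.1.2.1 _ hab₂ _ hxy hc,
    by rw [← hE, insert_erase hab]⟩

def apexTriangle (a b r : ℕ) : ℕ × ℕ × ℕ :=
  if r < a then (r, a, b) else if r < b then (a, r, b) else (a, b, r)

theorem apexTriangle_of_lt {r : ℕ} (h : r < a) : apexTriangle a b r = (r, a, b) := if_pos h

theorem apexTriangle_of_lt_of_lt {r : ℕ} (ha : a < r) (hb : r < b) :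
    apexTriangle a b r = (a, r, b) := by
  rw [apexTriangle, if_neg ha.not_gt, if_pos hb]

theorem apexTriangle_of_gt {r : ℕ} (hab : a < b) (hb : b < r) :
    apexTriangle a b r = (a, b, r) := by
  rw [apexTriangle, if_neg (hab.trans hb).not_gt, if_neg hb.not_gt]

theorem mem_trianglesOf_s18 {t : ℕ × ℕ × ℕ} : t ∈ trianglesOf n T ↔
    t.1 < t.2.1 ∧ t.2.1 < t.2.2 ∧ IsEdge n T t.1 t.2.1 ∧ IsEdge n T t.2.1 t.2.2 ∧
      IsEdge n T t.1 t.2.2 := by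
  simp only [trianglesOf, mem_filter, mem_product, mem_range, and_iff_right_iff_imp]
  intro h
  have := h.2.2.2.2.1
  omega

theorem trianglesOf_sdiff_subset (hT₂ : IsTriangulation n T₂)
    (hxy : (x, y) ∈ T₂) (hE : T₁.erase (a, b) = T₂.erase (x, y)) (hc : Crosses (a, b) (x, y)) :
    trianglesOf n T₁ \ trianglesOf n T₂ ⊆ {apexTriangle a b x, apexTriangle a b y} := by
  rintro ⟨t₁, t₂, t₃⟩ ht
  simp only [mem_sdiff, mem_trianglesOf_s18] at ht
  obtain ⟨⟨h₁₂, h₂₃, e₁₂, e₂₃, e₁₃⟩, ht₂⟩ := ht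
  have hside : (t₁ = a ∧ t₂ = b) ∨ (t₂ = a ∧ t₃ = b) ∨ (t₁ = a ∧ t₃ = b) := by
    by_contra! H
    refine ht₂ ⟨h₁₂, h₂₃, e₁₂.of_erase_eq hE ?_, e₂₃.of_erase_eq hE ?_, e₁₃.of_erase_eq hE ?_⟩ <;>
      simp only [ne_eq, Prod.mk.injEq] <;> tauto
  -- the other two sides survive the flip, so they do not cross the new diagonal
  have hfree {u v : ℕ} (h : IsEdge n T₁ u v) : (u = a ∧ v = b) ∨ ¬Crosses (u, v) (x, y) := by
    by_cases huv : u = a ∧ v = b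
    · exact Or.inl huv
    · exact Or.inr (hT₂.not_crosses (h.of_erase_eq hE (by simpa using huv)) (hT₂.isEdge_of_mem hxy))
  have f₁₂ := hfree e₁₂
  have f₂₃ := hfree e₂₃
  have f₁₃ := hfree e₁₃
  simp only [Crosses] at hc f₁₂ f₂₃ f₁₃
  rw [mem_insert, mem_singleton]
  rcases hside with ⟨rfl, rfl⟩ | ⟨rfl, rfl⟩ | ⟨rfl, rfl⟩
  · obtain rfl | rfl : t₃ = x ∨ t₃ = y := by omega
    · exact Or.inl (apexTriangle_of_gt h₁₂ h₂₃).symm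
    · exact Or.inr (apexTriangle_of_gt h₁₂ h₂₃).symm
  · obtain rfl | rfl : t₁ = x ∨ t₁ = y := by omega
    · exact Or.inl (apexTriangle_of_lt h₁₂).symm
    · exact Or.inr (apexTriangle_of_lt h₁₂).symm
  · obtain rfl | rfl : t₂ = x ∨ t₂ = y := by omega
    · exact Or.inl (apexTriangle_of_lt_of_lt h₁₂ h₂₃).symm
    · exact Or.inr (apexTriangle_of_lt_of_lt h₁₂ h₂₃).symm

theorem trianglesOf_sdiff_eq (hT₁ : IsTriangulation n T₁) (hT₂ : IsTriangulation n T₂)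
    (hab : (a, b) ∈ T₁) (hxy : (x, y) ∈ T₂) (hE : T₁.erase (a, b) = T₂.erase (x, y))
    (hc : Crosses (a, b) (x, y)) :
    trianglesOf n T₁ \ trianglesOf n T₂ = {apexTriangle a b x, apexTriangle a b y} := by
  have hab₁ := hT₁.isEdge_of_mem hab
  have hab₂ : ¬IsEdge n T₂ a b := fun h => hT₂.not_crosses h (hT₂.isEdge_of_mem hxy) hc
  have hd := hT₁.isDiagonal_of_mem hab
  have hab_lt : a < b := by omega
  obtain ⟨p, hap, hpb, hap', hpb'⟩ := hT₁.exists_inner_apex hab₁ hd.1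
  obtain ⟨q, hq⟩ := hT₁.exists_outer_apex hab
  have hP : (a, p, b) ∈ trianglesOf n T₁ \ trianglesOf n T₂ := by
    simp only [mem_sdiff, mem_trianglesOf_s18]
    exact ⟨⟨hap, hpb, hap', hpb', hab₁⟩, fun h => hab₂ h.2.2.2.2⟩
  have hQ : apexTriangle a b q ∈ trianglesOf n T₁ \ trianglesOf n T₂ := by
    rcases hq with ⟨hqa, hqa', hqb'⟩ | ⟨hbq, haq', hbq'⟩
    · simp only [apexTriangle_of_lt hqa, mem_sdiff, mem_trianglesOf_s18]
      exact ⟨⟨hqa, by omega, hqa', hab₁, hqb'⟩, fun h => hab₂ h.2.2.2.1⟩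
    · simp only [apexTriangle_of_gt hab_lt hbq, mem_sdiff, mem_trianglesOf_s18]
      exact ⟨⟨hab_lt, hbq, hab₁, hbq', haq'⟩, fun h => hab₂ h.2.2.1⟩
  have hPQ : (a, p, b) ≠ apexTriangle a b q := by
    rcases hq with ⟨hqa, -⟩ | ⟨hbq, -⟩
    · simp only [apexTriangle_of_lt hqa, ne_eq, Prod.mk.injEq]; omega
    · simp only [apexTriangle_of_gt hab_lt hbq, ne_eq, Prod.mk.injEq]; omega
  refine eq_of_subset_of_card_le (trianglesOf_sdiff_subset hT₂ hxy hE hc) ?_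
  exact card_le_two.trans (one_lt_card.2 ⟨_, hP, _, hQ, hPQ⟩)

theorem weight_sub_weight_of_crosses {W : ℕ → ℕ → ℕ → ℝ} (hT₁ : IsTriangulation n T₁)
    (hT₂ : IsTriangulation n T₂) (hab : (a, b) ∈ T₁) (hxy : (x, y) ∈ T₂)
    (hE : T₁.erase (a, b) = T₂.erase (x, y)) (h : a < x ∧ x < b ∧ b < y) :
    weight n W T₁ - weight n W T₂ = W a x b + W a b y - (W a x y + W x b y) := by
  have hc : Crosses (a, b) (x, y) := Or.inl h
  have hab' := (hT₁.isDiagonal_of_mem hab).1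
  rw [weight, weight, ← sum_sdiff_sub_sum_sdiff, trianglesOf_sdiff_eq hT₂ hT₁ hxy hab hE.symm
    (crosses_comm.1 hc), trianglesOf_sdiff_eq hT₁ hT₂ hab hxy hE hc,
    apexTriangle_of_lt_of_lt h.1 h.2.1, apexTriangle_of_gt (by omega) h.2.2,
    apexTriangle_of_lt h.1, apexTriangle_of_lt_of_lt h.2.1 h.2.2, sum_pair (by simp; omega),
    sum_pair (by simp; omega)]

theorem abs_tetrahedron_le_one {W : ℕ → ℕ → ℕ → ℝ} (hcyc : ∀ i j k, W i j k = W j k i)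
    (hanti : ∀ i j k, W i j k = -W i k j)
    (htet : ∀ i j k l, i ≤ n + 1 → j ≤ n + 1 → k ≤ n + 1 → l ≤ n + 1 →
      |W i j l + W j k l + W k i l + W k j i| ≤ 1)
    {i j k l : ℕ} (hi : i ≤ n + 1) (hj : j ≤ n + 1) (hk : k ≤ n + 1) (hl : l ≤ n + 1) :
    |W i j k + W i k l - (W i j l + W j k l)| ≤ 1 := by
  have h := htet i j l k hi hj hl hk
  rw [hanti j l k, ← hcyc k l i, ← hcyc i k l, ← hcyc i l j, hanti i l j] at h
  convert h using 2
  ring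

theorem abs_weight_sub_le_one_of_isFlip {W : ℕ → ℕ → ℕ → ℝ}
    (hcyc : ∀ i j k, W i j k = W j k i) (hanti : ∀ i j k, W i j k = -W i k j)
    (htet : ∀ i j k l, i ≤ n + 1 → j ≤ n + 1 → k ≤ n + 1 → l ≤ n + 1 →
      |W i j l + W j k l + W k i l + W k j i| ≤ 1)
    (h : IsFlip n T₁ T₂) : |weight n W T₁ - weight n W T₂| ≤ 1 := by
  obtain ⟨a, b, x, y, hab, hxy, hE, hc⟩ := h.exists_crosses
  have hb := (h.1.isDiagonal_of_mem hab).2.1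
  have hy := (h.2.1.isDiagonal_of_mem hxy).2.1
  rcases hc with hc | hc
  · rw [weight_sub_weight_of_crosses h.1 h.2.1 hab hxy hE hc]
    exact abs_tetrahedron_le_one hcyc hanti htet (by omega) (by omega) hb hy
  · rw [abs_sub_comm, weight_sub_weight_of_crosses h.2.1 h.1 hxy hab hE.symm hc]
    exact abs_tetrahedron_le_one hcyc hanti htet (by omega) (by omega) hy hb

theorem IsTriangulation.flip (hT : IsTriangulation n T) (hab : (a, b) ∈ T) (hqa : q < a)
    (hap : a < p) (hpb : p < b) (hqa' : IsEdge n T q a) (hqb' : IsEdge n T q b)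
    (hap' : IsEdge n T a p) (hpb' : IsEdge n T p b) :
    IsTriangulation n (insert (q, p) (T.erase (a, b))) := by
  have hd := hT.isDiagonal_of_mem hab
  have hfree : ∀ g ∈ T.erase (a, b), ¬Crosses (q, p) g := by
    rintro ⟨u, v⟩ hg hc
    obtain ⟨hne, hg⟩ := mem_erase.1 hg
    have huv := hT.isEdge_of_mem hg
    have h₁ := hT.not_crosses hqa' huv
    have h₂ := hT.not_crosses hqb' huv
    have h₃ := hT.not_crosses hap' huv
    have h₄ := hT.not_crosses hpb' huv
    simp only [ne_eq, Prod.mk.injEq] at hne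
    simp only [Crosses] at hc h₁ h₂ h₃ h₄
    omega
  refine ⟨?_, ?_, ?_⟩
  · intro d hd'
    rcases mem_insert.1 hd' with rfl | hd'
    · exact ⟨by omega, by omega, by omega⟩
    · exact hT.1 _ (mem_of_mem_erase hd')
  · intro d hd' e he
    rcases mem_insert.1 hd' with rfl | hd' <;> rcases mem_insert.1 he with rfl | he
    · simp only [Crosses]; omega
    · exact hfree e he
    · exact fun hc => hfree d hd' (crosses_comm.1 hc)
    · exact hT.2.1 _ (mem_of_mem_erase hd') _ (mem_of_mem_erase he)
  · rintro ⟨u, v⟩ huv hnot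
    by_cases hmem : (u, v) ∈ T
    · obtain ⟨rfl, rfl⟩ : u = a ∧ v = b := by
        by_contra hne
        exact hnot (mem_insert_of_mem (mem_erase.2 ⟨by simpa using hne, hmem⟩))
      exact ⟨(q, p), mem_insert_self _ _, Or.inr ⟨hqa, hap, hpb⟩⟩
    obtain ⟨g, hg, hc⟩ := hT.2.2 _ huv hmem
    by_cases hga : g = (a, b)
    swap
    · exact ⟨g, mem_insert_of_mem (mem_erase.2 ⟨hga, hg⟩), hc⟩
    subst hga
    -- `(u, v)` crosses `(a, b)`, hence one of the other four sides of the quadrilateral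
    have hqp : ¬(u = q ∧ v = p) := by
      rintro ⟨rfl, rfl⟩
      exact hnot (mem_insert_self _ _)
    by_contra! H
    have hside {c e : ℕ} (h : IsEdge n T c e) (hne : (c, e) ≠ (a, b)) : ¬Crosses (u, v) (c, e) :=
      fun hc' => H _ (mem_insert_of_mem (mem_erase.2 ⟨hne, h.mem_of_crosses hc' huv.2.1⟩)) hc'
    have h₁ := hside hqa' (by simp; omega)
    have h₂ := hside hqb' (by simp; omega)
    have h₃ := hside hap' (by simp; omega)
    have h₄ := hside hpb' (by simp; omega)
    simp only [Crosses] at hc h₁ h₂ h₃ h₄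
    rcases hc with hc | hc <;> omega

theorem IsTriangulation.exists_isFlip_card_lt (hT : IsTriangulation n T)
    (h : ∃ d ∈ T, d.1 ≠ 0) :
    ∃ T', IsFlip n T T' ∧ #(T'.filter (·.1 ≠ 0)) < #(T.filter (·.1 ≠ 0)) := by
  obtain ⟨d, hd, hd0⟩ := h
  obtain ⟨⟨a, b⟩, hab, hmax⟩ :=
    (T.filter (·.1 ≠ 0)).exists_max_image (fun d => d.2 - d.1) ⟨d, mem_filter.2 ⟨hd, hd0⟩⟩
  obtain ⟨hab, ha⟩ := mem_filter.1 hab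
  have hd := hT.isDiagonal_of_mem hab
  have hmax' {u v : ℕ} (h : (u, v) ∈ T) (hu : u ≠ 0) : v - u ≤ b - a :=
    hmax (u, v) (mem_filter.2 ⟨h, hu⟩)
  -- a longest diagonal avoiding `0` has outer apex `0`
  obtain ⟨q0a, q0b⟩ : IsEdge n T 0 a ∧ IsEdge n T 0 b := by
    obtain ⟨q, ⟨hqa, hqa', hqb'⟩ | ⟨hbq, haq', -⟩⟩ := hT.exists_outer_apex hab
    · obtain rfl : q = 0 := by
        by_contra hq
        have := hmax' (hqb'.mem_of_isDiagonal (by omega) (by omega)) hq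
        omega
      exact ⟨hqa', hqb'⟩
    · have := hmax' (haq'.mem_of_isDiagonal (by omega) (by omega)) ha
      omega
  obtain ⟨p, hap, hpb, hap', hpb'⟩ := hT.exists_inner_apex (hT.isEdge_of_mem hab) hd.1
  refine ⟨insert (0, p) (T.erase (a, b)), ⟨hT, hT.flip hab (by omega) hap hpb q0a q0b hap' hpb',
    (a, b), (0, p), hab, fun h => hT.2.1 _ h _ hab (Or.inl ⟨by omega, hap, hpb⟩), rfl⟩, ?_⟩
  rw [filter_insert, if_neg (by simp), filter_erase]
  exact card_erase_lt_of_mem (mem_filter.2 ⟨hab, ha⟩)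

theorem IsTriangulation.subset_of_forall_fst_eq_zero (hT₂ : IsTriangulation n T₂)
    (h₁ : ∀ d ∈ T₁, IsDiagonal n d ∧ d.1 = 0) (h₂ : ∀ d ∈ T₂, d.1 = 0) : T₁ ⊆ T₂ := by
  intro d hd
  by_contra hd₂
  obtain ⟨e, he, hc⟩ := hT₂.2.2 d (h₁ d hd).1 hd₂
  have := h₁ d hd
  have := h₂ e he
  simp only [Crosses] at hc
  omega

theorem IsTriangulation.exists_reflTransGen_forall_fst_eq_zero (hT : IsTriangulation n T) :
    ∃ T₀, IsTriangulation n T₀ ∧ (∀ d ∈ T₀, d.1 = 0) ∧ ReflTransGen (IsFlip n) T T₀ := by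
  induction hk : #(T.filter (·.1 ≠ 0)) using Nat.strong_induction_on generalizing T with
  | _ k ih =>
    by_cases h : ∃ d ∈ T, d.1 ≠ 0
    · obtain ⟨T', hflip, hlt⟩ := hT.exists_isFlip_card_lt h
      obtain ⟨T₀, hT₀, h₀, hreach⟩ := ih _ (hk ▸ hlt) hflip.2.1 rfl
      exact ⟨T₀, hT₀, h₀, .head hflip hreach⟩
    · push Not at h
      exact ⟨T, hT, h, .refl⟩

theorem IsTriangulation.reflTransGen_isFlip (hT₁ : IsTriangulation n T₁)
    (hT₂ : IsTriangulation n T₂) : ReflTransGen (IsFlip n) T₁ T₂ := by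
  obtain ⟨S₁, hS₁, h₁, hr₁⟩ := hT₁.exists_reflTransGen_forall_fst_eq_zero
  obtain ⟨S₂, hS₂, h₂, hr₂⟩ := hT₂.exists_reflTransGen_forall_fst_eq_zero
  have hS : S₁ = S₂ := subset_antisymm
    (hS₂.subset_of_forall_fst_eq_zero (fun d hd => ⟨hS₁.1 d hd, h₁ d hd⟩) h₂)
    (hS₁.subset_of_forall_fst_eq_zero (fun d hd => ⟨hS₂.1 d hd, h₂ d hd⟩) h₁)
  exact hr₁.trans (hS ▸ reflTransGen_swap.1
    (ReflTransGen.mono (p := Function.swap (IsFlip n)) (fun _ _ h => h.symm) _ _ hr₂))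

theorem Relation.ReflTransGen.exists_chain {α : Type*} {r : α → α → Prop} {a b : α}
    (h : ReflTransGen r a b) :
    ∃ m, ∃ g : ℕ → α, g 0 = a ∧ g m = b ∧ ∀ i < m, r (g i) (g (i + 1)) := by
  induction h using Relation.ReflTransGen.head_induction_on with
  | refl => exact ⟨0, fun _ => b, rfl, rfl, by simp⟩
  | @head a c hac _ ih =>
    obtain ⟨m, g, hg₀, hgm, hg⟩ := ih
    refine ⟨m + 1, fun | 0 => a | i + 1 => g i, rfl, hgm, ?_⟩
    rintro (_ | i) hi
    · simpa [hg₀] using hac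
    · exact hg i (by omega)

theorem abs_sub_le_flipDist (φ : Finset (ℕ × ℕ) → ℝ)
    (hφ : ∀ T T', IsFlip n T T' → |φ T - φ T'| ≤ 1) (h : ReflTransGen (IsFlip n) T₁ T₂) :
    |φ T₁ - φ T₂| ≤ flipDist n T₁ T₂ := by
  obtain ⟨g, hg₀, hgm, hg⟩ : flipDist n T₁ T₂ ∈
      {m | ∃ g : ℕ → Finset (ℕ × ℕ), g 0 = T₁ ∧ g m = T₂ ∧ ∀ i < m, IsFlip n (g i) (g (i + 1))} :=
    Nat.sInf_mem h.exists_chain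
  calc |φ T₁ - φ T₂| = |∑ i ∈ range (flipDist n T₁ T₂), (φ (g i) - φ (g (i + 1)))| := by
        rw [sum_range_sub', hg₀, hgm]
    _ ≤ _ := abs_sum_le_sum_abs _ _
    _ ≤ ∑ _ ∈ range (flipDist n T₁ T₂), (1 : ℝ) :=
      sum_le_sum fun i hi => hφ _ _ (hg i (mem_range.1 hi))
    _ = _ := by simp

/-- If an antisymmetric weight function `W` on oriented triples of the
vertices of the `(n+2)`-gon satisfies the tetrahedral constraints, and there
are two triangulations `T_i`, `T_f` with `W(T_i) - W(T_f) = 2n - 6`, then the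
diameter of the flip graph on triangulations of the `(n+2)`-gon is at least
`2n - 6`. -/
theorem flip_graph_diameter_lower_bound (n : ℕ) (W : ℕ → ℕ → ℕ → ℝ)
    (hcyc : ∀ i j k, W i j k = W j k i)
    (hanti : ∀ i j k, W i j k = -W i k j)
    (htet : ∀ i j k l, i ≤ n + 1 → j ≤ n + 1 → k ≤ n + 1 → l ≤ n + 1 →
      |W i j l + W j k l + W k i l + W k j i| ≤ 1)
    (Ti Tf : Finset (ℕ × ℕ)) (hTi : IsTriangulation n Ti)
    (hTf : IsTriangulation n Tf)
    (hW : weight n W Ti - weight n W Tf = 2 * n - 6) :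
    ∃ T₁ T₂ : Finset (ℕ × ℕ), IsTriangulation n T₁ ∧ IsTriangulation n T₂ ∧
      (2 * n - 6 : ℝ) ≤ (flipDist n T₁ T₂ : ℝ) := by
  refine ⟨Ti, Tf, hTi, hTf, ?_⟩
  have h := abs_sub_le_flipDist (weight n W)
    (fun _ _ => abs_weight_sub_le_one_of_isFlip hcyc hanti htet) (hTi.reflTransGen_isFlip hTf)
  rw [hW] at h
  exact (le_abs_self _).trans h
end
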